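/- arXiv:1409.4067 — 8 statements merged into one kernel-verified Lean document; each statement's English description precedes it below -/
import Mathlib

section
/- Let ω, ω_X, ω_C, γ, g be real numbers with γ ≠ 0 and ϖ_C = ω − ω_C ≠ 0, and set ϖ_X = ω − ω_X. Suppose φ_X : ℝ → ℝ is continuously differentiable, φ_C : ℝ → ℝ is twice continuously differentiable, and the pair (φ_X, φ_C) satisfies the stationary polariton envelope equations at every x ∈ ℝ. Set ζ(x) = g·φ_X(x)². Then φ_C(x) = γ⁻¹·(ϖ_X − g·φ_X(x)²)·φ_X(x) for all x, and there exists a real constant K such that for all x ∈ ℝ, (3ζ(x) − ϖ_X)²·(ζ′(x))² = 8·ζ(x)·Q(ζ(x)), where Q is the cubic polynomial with constant K. -/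
/-!
The envelope system is Hamiltonian: multiplying the second equation by `φC'` and using the
derivative of the first, `γ φC' = (ϖX - 3 g φX²) φX'`, shows that the energy
`-¼ φC'² - ½ ϖC φC² + ½ ϖX φX² - ¾ g φX⁴` is a first integral. The first equation expresses
`φC` through `φX`, so multiplying the conserved energy by `-4γ²` turns it into a relation between
`φX` and `φX'` alone; multiplying once more by `4 g ζ` and using `ζ' = 2 g φX φX'` gives the
cubic ODE for `ζ`, with `K = 2 g γ² E / ϖC` for the energy `E`.
-/

section Envelope

variable {φX φC : ℝ → ℝ} {ϖX ϖC γ g : ℝ}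

lemma cavity_eq_of_envelope_eq (hγ : γ ≠ 0) {x : ℝ}
    (heq1 : (g * φX x ^ 2 - ϖX) * φX x + γ * φC x = 0) :
    φC x = γ⁻¹ * (ϖX - g * φX x ^ 2) * φX x := by
  field_simp
  linear_combination heq1

lemma mul_deriv_cavity_eq_of_envelope_eq (hX : Differentiable ℝ φX) (hC : Differentiable ℝ φC)
    (heq1 : ∀ x, (g * φX x ^ 2 - ϖX) * φX x + γ * φC x = 0) (x : ℝ) :
    γ * deriv φC x = (ϖX - 3 * g * φX x ^ 2) * deriv φX x := by
  have hX' := (hX x).hasDerivAt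
  have hsum : HasDerivAt (fun y => (g * φX y ^ 2 - ϖX) * φX y + γ * φC y) _ x :=
    (((hX'.pow 2).const_mul g).sub_const ϖX).mul hX' |>.add ((hC x).hasDerivAt.const_mul γ)
  rw [funext heq1] at hsum
  simp only [Pi.pow_apply, Nat.cast_ofNat] at hsum
  linear_combination -(hasDerivAt_const x (0 : ℝ)).unique hsum

noncomputable def polaritonEnergy (ϖX ϖC g : ℝ) (φX φC : ℝ → ℝ) (x : ℝ) : ℝ :=
  -(1/4) * deriv φC x ^ 2 - (1/2) * ϖC * φC x ^ 2 + (1/2) * ϖX * φX x ^ 2 - (3/4) * g * φX x ^ 4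

lemma hasDerivAt_polaritonEnergy {x : ℝ} (hX : DifferentiableAt ℝ φX x)
    (hC : DifferentiableAt ℝ φC x) (hC' : DifferentiableAt ℝ (deriv φC) x) :
    HasDerivAt (polaritonEnergy ϖX ϖC g φX φC)
      (-(1/2) * deriv φC x * deriv (deriv φC) x - ϖC * φC x * deriv φC x
        + ϖX * φX x * deriv φX x - 3 * g * φX x ^ 3 * deriv φX x) x := by
  have h : HasDerivAt (polaritonEnergy ϖX ϖC g φX φC) _ x :=
    ((((hC'.hasDerivAt.pow 2).const_mul (-(1/4))).sub
      ((hC.hasDerivAt.pow 2).const_mul ((1/2) * ϖC))).add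
      ((hX.hasDerivAt.pow 2).const_mul ((1/2) * ϖX))).sub
      ((hX.hasDerivAt.pow 4).const_mul ((3/4) * g))
  convert h using 1
  push_cast
  ring

theorem polaritonEnergy_eq_const (hX : Differentiable ℝ φX) (hC : Differentiable ℝ φC)
    (hC' : Differentiable ℝ (deriv φC))
    (heq1 : ∀ x, (g * φX x ^ 2 - ϖX) * φX x + γ * φC x = 0)
    (heq2 : ∀ x, -(1/2) * deriv (deriv φC) x - ϖC * φC x + γ * φX x = 0) (x y : ℝ) :
    polaritonEnergy ϖX ϖC g φX φC x = polaritonEnergy ϖX ϖC g φX φC y := by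
  have hderiv (z : ℝ) : HasDerivAt (polaritonEnergy ϖX ϖC g φX φC) 0 z := by
    convert hasDerivAt_polaritonEnergy (hX z) (hC z) (hC' z) using 1
    linear_combination -deriv φC z * heq2 z + φX z * mul_deriv_cavity_eq_of_envelope_eq hX hC heq1 z
  exact is_const_of_deriv_eq_zero (fun z => (hderiv z).differentiableAt)
    (fun z => (hderiv z).deriv) x y

lemma neg_four_mul_sq_mul_polaritonEnergy (hX : Differentiable ℝ φX)
    (hC : Differentiable ℝ φC) (heq1 : ∀ x, (g * φX x ^ 2 - ϖX) * φX x + γ * φC x = 0)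
    (x : ℝ) :
    -4 * γ ^ 2 * polaritonEnergy ϖX ϖC g φX φC x =
      (ϖX - 3 * g * φX x ^ 2) ^ 2 * deriv φX x ^ 2
        + 2 * ϖC * ((ϖX - g * φX x ^ 2) * φX x) ^ 2
        - 2 * ϖX * γ ^ 2 * φX x ^ 2 + 3 * g * γ ^ 2 * φX x ^ 4 := by
  have hd := mul_deriv_cavity_eq_of_envelope_eq hX hC heq1 x
  unfold polaritonEnergy
  linear_combination (γ * deriv φC x + (ϖX - 3 * g * φX x ^ 2) * deriv φX x) * hd
    + 2 * ϖC * (γ * φC x + (ϖX - g * φX x ^ 2) * φX x) * heq1 x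

end Envelope

lemma zeta_ode_of_energy_identity {ϖX ϖC γ g φ φ' E : ℝ} (hϖC : ϖC ≠ 0)
    (hE : -4 * γ ^ 2 * E = (ϖX - 3 * g * φ ^ 2) ^ 2 * φ' ^ 2
        + 2 * ϖC * ((ϖX - g * φ ^ 2) * φ) ^ 2 - 2 * ϖX * γ ^ 2 * φ ^ 2 + 3 * g * γ ^ 2 * φ ^ 4) :
    (3 * (g * φ ^ 2) - ϖX) ^ 2 * (2 * g * φ * φ') ^ 2 =
      8 * (g * φ ^ 2) *
        (-ϖC * ((g * φ ^ 2) ^ 3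
          - (1/2) * (3 * (ϖX - γ ^ 2 / ϖC) + ϖX) * (g * φ ^ 2) ^ 2
          + (ϖX - γ ^ 2 / ϖC) * ϖX * (g * φ ^ 2) + 2 * g * γ ^ 2 * E / ϖC)) := by
  field_simp
  linear_combination (-8 * g ^ 2 * φ ^ 2) * hE

/-- Theorem 1(a), forward direction: the stationary polariton envelope equations
imply the cubic relation for `φC` and the first-order ODE for `ζ = g·φX²`. -/
theorem polariton_envelope_implies_zeta_ODE
    (ω ωX ωC γ g : ℝ) (hγ : γ ≠ 0) (hϖC : ω - ωC ≠ 0)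
    (φX φC : ℝ → ℝ) (hφX : ContDiff ℝ 1 φX) (hφC : ContDiff ℝ 2 φC)
    (heq1 : ∀ x : ℝ, (g * φX x ^ 2 - (ω - ωX)) * φX x + γ * φC x = 0)
    (heq2 : ∀ x : ℝ, -(1/2) * deriv (deriv φC) x - (ω - ωC) * φC x + γ * φX x = 0) :
    (∀ x : ℝ, φC x = γ⁻¹ * ((ω - ωX) - g * φX x ^ 2) * φX x) ∧
    ∃ K : ℝ, ∀ x : ℝ,
      (3 * (g * φX x ^ 2) - (ω - ωX)) ^ 2 * (deriv (fun y => g * φX y ^ 2) x) ^ 2 =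
      8 * (g * φX x ^ 2) *
        (-(ω - ωC) * ((g * φX x ^ 2) ^ 3
          - (1/2) * (3 * ((ω - ωX) - γ ^ 2 / (ω - ωC)) + (ω - ωX)) * (g * φX x ^ 2) ^ 2
          + ((ω - ωX) - γ ^ 2 / (ω - ωC)) * (ω - ωX) * (g * φX x ^ 2) + K)) := by
  have hX : Differentiable ℝ φX := hφX.differentiable one_ne_zero
  have hC : Differentiable ℝ φC := hφC.differentiable two_ne_zero
  refine ⟨fun x => cavity_eq_of_envelope_eq hγ (heq1 x),
    2 * g * γ ^ 2 * polaritonEnergy (ω - ωX) (ω - ωC) g φX φC 0 / (ω - ωC), fun x => ?_⟩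
  have hζ : deriv (fun y => g * φX y ^ 2) x = 2 * g * φX x * deriv φX x :=
    (((hX x).hasDerivAt.pow 2).const_mul g).deriv.trans (by ring)
  rw [hζ]
  apply zeta_ode_of_energy_identity hϖC
  rw [← polaritonEnergy_eq_const hX hC hφC.differentiable_deriv_two heq1 heq2 x 0,
    neg_four_mul_sq_mul_polaritonEnergy hX hC heq1]
end

section
/- Let ϖ_X, ϖ_C, γ be real numbers with ϖ_C ≠ 0, let K be a real constant, and let Q be the cubic polynomial with constant K. If Q(ϖ_X/3) = 0, then Q(z) = −ϖ_C·(z − ϖ_X/3)²·(z − ζ₀) for all z ∈ ℝ, where ζ₀ = (4/3)·ϖ_X − (3/2)·γ²/ϖ_C; consequently 8·z·Q(z) = (3z − ϖ_X)²·(−(8ϖ_C/9))·z·(z − ζ₀) for all z ∈ ℝ. -/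
/-- If `ϖX/3` is a root of the cubic `Q`, then `Q` factors with `ϖX/3` as a double root,
and the factor `(3z − ϖX)²` appears in `8·z·Q(z)`. -/
theorem Q_factors_at_double_root
    (ϖX ϖC γ K : ℝ) (hϖC : ϖC ≠ 0)
    (hQ : -ϖC * ((ϖX / 3) ^ 3 - (1/2) * (3 * (ϖX - γ ^ 2 / ϖC) + ϖX) * (ϖX / 3) ^ 2
      + (ϖX - γ ^ 2 / ϖC) * ϖX * (ϖX / 3) + K) = 0) :
    ∀ z : ℝ,
      (-ϖC * (z ^ 3 - (1/2) * (3 * (ϖX - γ ^ 2 / ϖC) + ϖX) * z ^ 2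
          + (ϖX - γ ^ 2 / ϖC) * ϖX * z + K)
        = -ϖC * (z - ϖX / 3) ^ 2 * (z - ((4/3) * ϖX - (3/2) * γ ^ 2 / ϖC))) ∧
      (8 * z * (-ϖC * (z ^ 3 - (1/2) * (3 * (ϖX - γ ^ 2 / ϖC) + ϖX) * z ^ 2
          + (ϖX - γ ^ 2 / ϖC) * ϖX * z + K))
        = (3 * z - ϖX) ^ 2 * (-(8 * ϖC / 9)) * z * (z - ((4/3) * ϖX - (3/2) * γ ^ 2 / ϖC))) := by
  have h0 : (ϖX / 3) ^ 3 - (1/2) * (3 * (ϖX - γ ^ 2 / ϖC) + ϖX) * (ϖX / 3) ^ 2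
      + (ϖX - γ ^ 2 / ϖC) * ϖX * (ϖX / 3) + K = 0 := by
    rcases mul_eq_zero.1 hQ with h | h
    · exact absurd (neg_eq_zero.1 h) hϖC
    · exact h
  have hK : K = -((ϖX / 3) ^ 3 - (1/2) * (3 * (ϖX - γ ^ 2 / ϖC) + ϖX) * (ϖX / 3) ^ 2
      + (ϖX - γ ^ 2 / ϖC) * ϖX * (ϖX / 3)) := by linarith
  intro z
  subst hK
  constructor <;> field_simp <;> ring
end

section
/- Let ω, ω_X, ω_C, γ, g be real numbers with γ ≠ 0, g > 0, ω > max(ω_X, ω_C), and γ² < ϖ_X·ϖ_C < (3/2)·γ² (band 1.2). Then there exist functions φ_X, φ_C : ℝ → ℝ, with φ_X continuously differentiable and φ_C twice continuously differentiable, satisfying the stationary polariton envelope equations at every x ∈ ℝ, such that φ_X and φ_C are odd, monotone, and bounded, and φ_X(x)² tends to (ϖ_X − γ²/ϖ_C)/g as x → +∞ and as x → −∞. -/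
/-!
The first envelope equation gives `φ_C = (ϖ_X u - g u³)/γ` with `u = φ_X`, and the second
becomes `(ϖ_X u - g u³)'' = 2 ϖ_C g u (u² - a²)`, `a²` being the far-field value. Its first
integral `(ϖ_X u - g u³)' = (a² - u²) √(g (γ² - 2 ϖ_C g u²))` is the autonomous equation
`u' = h(u)` with `h(u) = (a² - u²) √(g (γ² - 2 ϖ_C g u²)) / (ϖ_X - 3 g u²)`. In band 1.2 both
the square root and `ϖ_X - 3 g u²` stay positive on `(-a, a)`, so `h > 0` there and `h` vanishes
only linearly at `±a`. Hence `x(u) = ∫₀ᵘ dv / h(v)` maps `(-a, a)` onto `ℝ`, and its inverse is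
the kink `φ_X`; it is odd because `h` is even.
-/

open Filter Set Topology

theorem contDiff_one_of_hasDerivAt {f f' : ℝ → ℝ} (hf : ∀ x, HasDerivAt f (f' x) x)
    (hf' : Continuous f') : ContDiff ℝ 1 f :=
  contDiff_one_iff_deriv.2
    ⟨fun x => (hf x).differentiableAt, by rwa [funext fun x => (hf x).deriv]⟩

theorem contDiff_two_of_hasDerivAt {f f' f'' : ℝ → ℝ} (hf : ∀ x, HasDerivAt f (f' x) x)
    (hf' : ∀ x, HasDerivAt f' (f'' x) x) (hf'' : Continuous f'') : ContDiff ℝ 2 f :=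
  contDiff_succ_iff_deriv (n := 1) |>.2 ⟨fun x => (hf x).differentiableAt, by simp,
    by rw [funext fun x => (hf x).deriv]; exact contDiff_one_of_hasDerivAt hf' hf''⟩

theorem exists_inverse_of_hasDerivAt_pos {X f : ℝ → ℝ} {l r : ℝ} (hlr : l < r)
    (hX : ∀ v ∈ Ioo l r, HasDerivAt X (f v) v) (hf : ∀ v ∈ Ioo l r, 0 < f v)
    (hl : Tendsto X (𝓝[>] l) atBot) (hr : Tendsto X (𝓝[<] r) atTop) :
    ∃ u : ℝ → ℝ, (∀ x, u x ∈ Ioo l r) ∧ (∀ x, X (u x) = x) ∧ (∀ v ∈ Ioo l r, u (X v) = v) ∧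
      StrictMono u ∧ (∀ x, HasDerivAt u (f (u x))⁻¹ x) ∧
      Tendsto u atTop (𝓝 r) ∧ Tendsto u atBot (𝓝 l) := by
  have hXcont : ContinuousOn X (Ioo l r) := fun v hv => (hX v hv).continuousAt.continuousWithinAt
  have hXmono : StrictMonoOn X (Ioo l r) :=
    strictMonoOn_of_hasDerivWithinAt_pos (convex_Ioo l r) hXcont
      (fun v hv => (hX v (interior_subset hv)).hasDerivWithinAt)
      (fun v hv => hf v (interior_subset hv))
  have hsurj : ∀ y, ∃ v ∈ Ioo l r, X v = y := by
    intro y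
    obtain ⟨v₁, hv₁, hXv₁⟩ :=
      ((hl.eventually (eventually_lt_atBot y)).and (Ioo_mem_nhdsGT hlr)).exists
    obtain ⟨v₂, hv₂, hXv₂⟩ :=
      ((hr.eventually (eventually_gt_atTop y)).and (Ioo_mem_nhdsLT hlr)).exists
    have hv₁₂ : v₁ ≤ v₂ := (hXmono.lt_iff_lt hXv₁ hXv₂).1 (hv₁.trans hv₂) |>.le
    obtain ⟨v, hv, rfl⟩ := intermediate_value_Icc hv₁₂
      (hXcont.mono (Icc_subset_Ioo hXv₁.1 hXv₂.2)) ⟨hv₁.le, hv₂.le⟩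
    exact ⟨v, Icc_subset_Ioo hXv₁.1 hXv₂.2 hv, rfl⟩
  set u := Function.invFunOn X (Ioo l r)
  have hu : ∀ x, u x ∈ Ioo l r ∧ X (u x) = x := fun x => Function.invFunOn_pos (hsurj x)
  have hu_mono : StrictMono u := fun x y hxy =>
    (hXmono.lt_iff_lt (hu x).1 (hu y).1).1 (by rw [(hu x).2, (hu y).2]; exact hxy)
  have hu_left : ∀ v ∈ Ioo l r, u (X v) = v := fun v hv => hXmono.injOn (hu _).1 hv (hu _).2
  have hu_range : range u = Ioo l r :=
    (range_subset_iff.2 fun x => (hu x).1).antisymm fun v hv => ⟨X v, hu_left v hv⟩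
  have hu_cont : Continuous u := continuous_iff_continuousAt.2 fun x =>
    continuousAt_of_monotoneOn_of_image_mem_nhds (hu_mono.monotone.monotoneOn univ) univ_mem
      (by rw [image_univ, hu_range]; exact isOpen_Ioo.mem_nhds (hu x).1)
  refine ⟨u, fun x => (hu x).1, fun x => (hu x).2, hu_left, hu_mono, fun x => ?_,
    tendsto_atTop_isLUB hu_mono.monotone (hu_range ▸ isLUB_Ioo hlr),
    tendsto_atBot_isGLB hu_mono.monotone (hu_range ▸ isGLB_Ioo hlr)⟩
  exact HasDerivAt.of_local_left_inverse hu_cont.continuousAt (hX _ (hu x).1)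
    (hf _ (hu x).1).ne' (Eventually.of_forall fun y => (hu y).2)

theorem tendsto_integral_nhdsLT_atTop_of_div_sub_le {f : ℝ → ℝ} {c r m : ℝ} (hcr : c < r)
    (hm : 0 < m) (hf : ContinuousOn f (Ico c r)) (hle : ∀ t ∈ Ico c r, m / (r - t) ≤ f t) :
    Tendsto (fun v => ∫ t in c..v, f t) (𝓝[<] r) atTop := by
  have hlower : ∀ v ∈ Ioo c r, m * Real.log ((r - c) / (r - v)) ≤ ∫ t in c..v, f t := by
    intro v hv
    have hsub : Icc c v ⊆ Ico c r := Icc_subset_Ico_right hv.2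
    have hpole : ContinuousOn (fun t => m / (r - t)) (Icc c v) :=
      continuousOn_const.div (continuousOn_const.sub continuousOn_id)
        fun t ht => (sub_pos.2 (ht.2.trans_lt hv.2)).ne'
    calc m * Real.log ((r - c) / (r - v))
        = ∫ t in c..v, m / (r - t) := by
          simp only [div_eq_mul_inv m, intervalIntegral.integral_const_mul,
            intervalIntegral.integral_comp_sub_left (fun t => t⁻¹) r,
            integral_inv_of_pos (sub_pos.2 hv.2) (sub_pos.2 hcr)]
      _ ≤ ∫ t in c..v, f t :=
          intervalIntegral.integral_mono_on hv.1.le (hpole.intervalIntegrable_of_Icc hv.1.le)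
            ((hf.mono hsub).intervalIntegrable_of_Icc hv.1.le) fun t ht => hle t (hsub ht)
  have hgap : Tendsto (fun v => r - v) (𝓝[<] r) (𝓝[>] 0) := by
    refine tendsto_nhdsWithin_iff.2
      ⟨?_, eventually_nhdsWithin_of_forall fun v hv => mem_Ioi.2 (sub_pos.2 hv)⟩
    simpa using ((continuous_sub_left r).tendsto r).mono_left nhdsWithin_le_nhds
  have hlog : Tendsto (fun v => m * Real.log ((r - c) / (r - v))) (𝓝[<] r) atTop := by
    refine (Real.tendsto_log_atTop.comp ?_).const_mul_atTop hm
    simp only [div_eq_mul_inv (r - c)]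
    exact (tendsto_inv_nhdsGT_zero.comp hgap).const_mul_atTop (sub_pos.2 hcr)
  exact tendsto_atTop_mono' _ (eventually_of_mem (Ioo_mem_nhdsLT hcr) hlower) hlog

theorem integral_zero_neg_eq_neg_of_even {f : ℝ → ℝ} (hf : ∀ t, f (-t) = f t) (v : ℝ) :
    ∫ t in (0 : ℝ)..-v, f t = -∫ t in (0 : ℝ)..v, f t := by
  calc ∫ t in (0 : ℝ)..-v, f t = ∫ t in (0 : ℝ)..-v, f (-t) := by simp only [hf]
    _ = -∫ t in (0 : ℝ)..v, f t := by
      rw [intervalIntegral.integral_comp_neg, neg_neg, neg_zero, intervalIntegral.integral_symm]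

/-- Band 1.2, written with `A = ϖ_X` and `B = ϖ_C`. -/
structure BandOneTwo (A B γ g : ℝ) : Prop where
  B_pos : 0 < B
  g_pos : 0 < g
  sq_lt_mul : γ ^ 2 < A * B
  mul_lt_three_halves_sq : A * B < 3 / 2 * γ ^ 2

noncomputable def amplitude (A B γ g : ℝ) : ℝ := √((A - γ ^ 2 / B) / g)

/-- The value of `(A u - g u³)'` at `u = v` along a solution, from the first integral of
`(A u - g u³)'' = 2 B g u (u² - a²)`, where `a = amplitude A B γ g`. -/
noncomputable def cubicVelocity (A B γ g v : ℝ) : ℝ :=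
  (amplitude A B γ g ^ 2 - v ^ 2) * √(g * (γ ^ 2 - 2 * B * g * v ^ 2))

noncomputable def excitonVelocity (A B γ g v : ℝ) : ℝ :=
  cubicVelocity A B γ g v / (A - 3 * g * v ^ 2)

namespace BandOneTwo

variable {A B γ g : ℝ}

theorem sq_gamma_pos (h : BandOneTwo A B γ g) : 0 < γ ^ 2 := by
  linarith [h.sq_lt_mul, h.mul_lt_three_halves_sq]

theorem far_field_pos (h : BandOneTwo A B γ g) : 0 < (A - γ ^ 2 / B) / g :=
  div_pos (sub_pos.2 ((div_lt_iff₀ h.B_pos).2 h.sq_lt_mul)) h.g_pos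

theorem amplitude_sq (h : BandOneTwo A B γ g) :
    amplitude A B γ g ^ 2 = (A - γ ^ 2 / B) / g :=
  Real.sq_sqrt h.far_field_pos.le

theorem amplitude_pos (h : BandOneTwo A B γ g) : 0 < amplitude A B γ g :=
  Real.sqrt_pos.2 h.far_field_pos

theorem mul_amplitude_sq (h : BandOneTwo A B γ g) :
    B * g * amplitude A B γ g ^ 2 = A * B - γ ^ 2 := by
  rw [h.amplitude_sq]
  field_simp [h.B_pos.ne', h.g_pos.ne']

theorem radicand_pos (h : BandOneTwo A B γ g) {v : ℝ} (hv : v ^ 2 < amplitude A B γ g ^ 2) :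
    0 < γ ^ 2 - 2 * B * g * v ^ 2 := by
  have := mul_lt_mul_of_pos_left hv (mul_pos h.B_pos h.g_pos)
  nlinarith [h.mul_amplitude_sq, h.mul_lt_three_halves_sq]

theorem cubic_deriv_pos (h : BandOneTwo A B γ g) {v : ℝ} (hv : v ^ 2 ≤ amplitude A B γ g ^ 2) :
    0 < A - 3 * g * v ^ 2 := by
  have := mul_le_mul_of_nonneg_left hv (mul_pos h.B_pos h.g_pos).le
  have : 0 < B * (A - 3 * g * v ^ 2) := by
    nlinarith [h.mul_amplitude_sq, h.mul_lt_three_halves_sq]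
  exact pos_of_mul_pos_right this h.B_pos.le

theorem cubicVelocity_pos (h : BandOneTwo A B γ g) {v : ℝ} (hv : v ^ 2 < amplitude A B γ g ^ 2) :
    0 < cubicVelocity A B γ g v :=
  mul_pos (sub_pos.2 hv) (Real.sqrt_pos.2 (mul_pos h.g_pos (h.radicand_pos hv)))

theorem excitonVelocity_pos (h : BandOneTwo A B γ g) {v : ℝ}
    (hv : v ^ 2 < amplitude A B γ g ^ 2) : 0 < excitonVelocity A B γ g v :=
  div_pos (h.cubicVelocity_pos hv) (h.cubic_deriv_pos hv.le)

theorem continuousOn_excitonVelocity (h : BandOneTwo A B γ g) :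
    ContinuousOn (excitonVelocity A B γ g) (Ioo (-amplitude A B γ g) (amplitude A B γ g)) :=
  (Continuous.continuousOn (by unfold cubicVelocity; fun_prop)).div (by fun_prop)
    fun v hv => (h.cubic_deriv_pos (sq_lt_sq' hv.1 hv.2).le).ne'

theorem exists_div_sub_le_inv_excitonVelocity (h : BandOneTwo A B γ g) :
    ∃ m > 0, ∀ t ∈ Ico 0 (amplitude A B γ g),
      m / (amplitude A B γ g - t) ≤ (excitonVelocity A B γ g t)⁻¹ := by
  set a := amplitude A B γ g
  have ha := h.amplitude_pos
  have hS : 0 < √(g * γ ^ 2) := Real.sqrt_pos.2 (mul_pos h.g_pos h.sq_gamma_pos)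
  refine ⟨(A - 3 * g * a ^ 2) / (2 * a * √(g * γ ^ 2)),
    div_pos (h.cubic_deriv_pos le_rfl) (by positivity), fun t ht => ?_⟩
  have hat : 0 < a - t := sub_pos.2 ht.2
  have ht2 : t ^ 2 < a ^ 2 := sq_lt_sq' (by linarith [ht.1]) ht.2
  have hroot : √(g * (γ ^ 2 - 2 * B * g * t ^ 2)) ≤ √(g * γ ^ 2) := by
    have : 0 ≤ 2 * B * g * t ^ 2 := by have := h.B_pos; have := h.g_pos; positivity
    exact Real.sqrt_le_sqrt (mul_le_mul_of_nonneg_left (by linarith) h.g_pos.le)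
  calc (A - 3 * g * a ^ 2) / (2 * a * √(g * γ ^ 2)) / (a - t)
      = (A - 3 * g * a ^ 2) / ((a - t) * (2 * a * √(g * γ ^ 2))) := by
        rw [div_div, mul_comm (2 * a * _)]
    _ ≤ (A - 3 * g * t ^ 2) / ((a - t) * ((a + t) * √(g * (γ ^ 2 - 2 * B * g * t ^ 2)))) := by
      refine div_le_div₀ (h.cubic_deriv_pos ht2.le).le (by nlinarith [h.g_pos])
        (mul_pos hat (mul_pos (by linarith [ht.1])
          (Real.sqrt_pos.2 (mul_pos h.g_pos (h.radicand_pos ht2)))))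
        (mul_le_mul_of_nonneg_left ?_ hat.le)
      exact mul_le_mul (by linarith [ht.2]) hroot (Real.sqrt_nonneg _) (by positivity)
    _ = (excitonVelocity A B γ g t)⁻¹ := by
      rw [show excitonVelocity A B γ g t =
        (a ^ 2 - t ^ 2) * √(g * (γ ^ 2 - 2 * B * g * t ^ 2)) / (A - 3 * g * t ^ 2) from rfl,
        inv_div]
      ring

theorem exists_exciton (h : BandOneTwo A B γ g) :
    ∃ u : ℝ → ℝ, (∀ x, u x ∈ Ioo (-amplitude A B γ g) (amplitude A B γ g)) ∧
      (∀ x, HasDerivAt u (excitonVelocity A B γ g (u x)) x) ∧ StrictMono u ∧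
      (∀ x, u (-x) = -u x) ∧ Tendsto u atTop (𝓝 (amplitude A B γ g)) ∧
      Tendsto u atBot (𝓝 (-amplitude A B γ g)) := by
  set a := amplitude A B γ g
  have ha : 0 < a := h.amplitude_pos
  set X := fun v => ∫ t in (0 : ℝ)..v, (excitonVelocity A B γ g t)⁻¹
  have hpos : ∀ t ∈ Ioo (-a) a, 0 < excitonVelocity A B γ g t := fun t ht =>
    h.excitonVelocity_pos (sq_lt_sq' ht.1 ht.2)
  have hcont : ContinuousOn (fun t => (excitonVelocity A B γ g t)⁻¹) (Ioo (-a) a) :=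
    h.continuousOn_excitonVelocity.inv₀ fun t ht => (hpos t ht).ne'
  have hX : ∀ v ∈ Ioo (-a) a, HasDerivAt X (excitonVelocity A B γ g v)⁻¹ v := fun v hv =>
    intervalIntegral.integral_hasDerivAt_right
      (hcont.mono (ordConnected_Ioo.uIcc_subset ⟨neg_lt_zero.2 ha, ha⟩ hv)).intervalIntegrable
      (hcont.stronglyMeasurableAtFilter isOpen_Ioo v hv)
      (hcont.continuousAt (isOpen_Ioo.mem_nhds hv))
  have hXodd : ∀ v, X (-v) = -X v :=
    integral_zero_neg_eq_neg_of_even fun t => by simp only [excitonVelocity, cubicVelocity, neg_sq]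
  obtain ⟨m, hm, hle⟩ := h.exists_div_sub_le_inv_excitonVelocity
  have hr : Tendsto X (𝓝[<] a) atTop := tendsto_integral_nhdsLT_atTop_of_div_sub_le ha hm
    (hcont.mono (Ico_subset_Ioo_left (neg_lt_zero.2 ha))) hle
  have hl : Tendsto X (𝓝[>] (-a)) atBot :=
    (tendsto_neg_atTop_atBot.comp (hr.comp tendsto_neg_nhdsGT_neg)).congr fun v => by
      simp only [Function.comp, hXodd, neg_neg]
  obtain ⟨u, hmem, hXu, huX, hmono, hderiv, htop, hbot⟩ :=
    exists_inverse_of_hasDerivAt_pos (neg_lt_self ha) hX (fun v hv => inv_pos.2 (hpos v hv))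
      hl hr
  refine ⟨u, hmem, fun x => by simpa only [inv_inv] using hderiv x, hmono, fun x => ?_,
    htop, hbot⟩
  calc u (-x) = u (X (-u x)) := by rw [hXodd, hXu]
    _ = -u x := huX _ ⟨neg_lt_neg (hmem x).2, by linarith [(hmem x).1]⟩

theorem hasDerivAt_cubic_comp (h : BandOneTwo A B γ g) {u : ℝ → ℝ} {x : ℝ}
    (hu : HasDerivAt u (excitonVelocity A B γ g (u x)) x)
    (hx : u x ^ 2 < amplitude A B γ g ^ 2) :
    HasDerivAt (fun y => A * u y - g * u y ^ 3) (cubicVelocity A B γ g (u x)) x := by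
  refine ((hu.const_mul A).fun_sub ((hu.fun_pow 3).const_mul g)).congr_deriv ?_
  rw [excitonVelocity]
  field_simp [(h.cubic_deriv_pos hx.le).ne']
  ring

theorem hasDerivAt_cubicVelocity_comp (h : BandOneTwo A B γ g) {u : ℝ → ℝ} {x : ℝ}
    (hu : HasDerivAt u (excitonVelocity A B γ g (u x)) x)
    (hx : u x ^ 2 < amplitude A B γ g ^ 2) :
    HasDerivAt (fun y => cubicVelocity A B γ g (u y))
      (2 * B * g * u x * (u x ^ 2 - amplitude A B γ g ^ 2)) x := by
  have hS : 0 < g * (γ ^ 2 - 2 * B * g * u x ^ 2) := mul_pos h.g_pos (h.radicand_pos hx)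
  have hroot := Real.sq_sqrt hS.le
  have hD := (h.cubic_deriv_pos hx.le).ne'
  have hsqrt :=
    ((((hu.fun_pow 2).const_mul (2 * B * g)).const_sub (γ ^ 2)).const_mul g).sqrt hS.ne'
  refine (((hu.fun_pow 2).const_sub (amplitude A B γ g ^ 2)).fun_mul hsqrt).congr_deriv ?_
  rw [excitonVelocity, cubicVelocity]
  have hr := (Real.sqrt_pos.2 hS).ne'
  have hab := h.mul_amplitude_sq
  generalize √(g * (γ ^ 2 - 2 * B * g * u x ^ 2)) = s at hr hroot ⊢
  generalize amplitude A B γ g = a at hab ⊢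
  generalize u x = v at hD hroot ⊢
  norm_num
  field_simp
  rw [div_eq_iff (by contrapose! hD; linarith)]
  linear_combination (-v * (a ^ 2 - v ^ 2)) * hroot - v * (a ^ 2 - v ^ 2) * g * hab

end BandOneTwo

theorem dark_soliton_band_1_2_general
    (ω ωX ωC γ g : ℝ) (hg : 0 < g)
    (hω : ω > max ωX ωC)
    (hband₁ : γ ^ 2 < (ω - ωX) * (ω - ωC)) (hband₂ : (ω - ωX) * (ω - ωC) < (3/2) * γ ^ 2) :
    ∃ φX φC : ℝ → ℝ,
      ContDiff ℝ 1 φX ∧ ContDiff ℝ 2 φC ∧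
      (∀ x : ℝ, (g * φX x ^ 2 - (ω - ωX)) * φX x + γ * φC x = 0) ∧
      (∀ x : ℝ, -(1/2) * deriv (deriv φC) x - (ω - ωC) * φC x + γ * φX x = 0) ∧
      (∀ x : ℝ, φX (-x) = -φX x) ∧ (∀ x : ℝ, φC (-x) = -φC x) ∧
      (Monotone φX ∨ Antitone φX) ∧ (Monotone φC ∨ Antitone φC) ∧
      (∃ M : ℝ, ∀ x : ℝ, |φX x| ≤ M) ∧ (∃ M : ℝ, ∀ x : ℝ, |φC x| ≤ M) ∧
      Tendsto (fun x => φX x ^ 2) atTop (nhds (((ω - ωX) - γ ^ 2 / (ω - ωC)) / g)) ∧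
      Tendsto (fun x => φX x ^ 2) atBot (nhds (((ω - ωX) - γ ^ 2 / (ω - ωC)) / g)) := by
  have h : BandOneTwo (ω - ωX) (ω - ωC) γ g :=
    ⟨sub_pos.2 ((le_max_right _ _).trans_lt hω), hg, hband₁, hband₂⟩
  have hγ : γ ≠ 0 := (pow_ne_zero_iff two_ne_zero).1 h.sq_gamma_pos.ne'
  obtain ⟨u, hmem, hu, hmono, hodd, htop, hbot⟩ := h.exists_exciton
  have hu2 : ∀ x, u x ^ 2 < amplitude (ω - ωX) (ω - ωC) γ g ^ 2 := fun x =>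
    sq_lt_sq' (hmem x).1 (hmem x).2
  set φC := fun x => ((ω - ωX) * u x - g * u x ^ 3) / γ
  have hφC : ∀ x, HasDerivAt φC (cubicVelocity (ω - ωX) (ω - ωC) γ g (u x) / γ) x := fun x =>
    (h.hasDerivAt_cubic_comp (hu x) (hu2 x)).div_const γ
  have hφC' := fun x => (h.hasDerivAt_cubicVelocity_comp (hu x) (hu2 x)).div_const γ
  have hu_cont : Continuous u := continuous_iff_continuousAt.2 fun x => (hu x).continuousAt
  refine ⟨u, φC, contDiff_one_of_hasDerivAt hu
      (h.continuousOn_excitonVelocity.comp_continuous hu_cont hmem),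
    contDiff_two_of_hasDerivAt hφC hφC' (by fun_prop),
    fun x => by simp only [φC]; field_simp; ring,
    fun x => ?_, hodd, fun x => by simp only [φC, hodd]; ring, Or.inl hmono.monotone, ?_,
    ⟨_, fun x => (abs_lt.2 (hmem x)).le⟩, ?_, ?_, ?_⟩
  · rw [funext fun x => (hφC x).deriv, (hφC' x).deriv]
    simp only [φC]
    field_simp
    linear_combination (u x) * h.mul_amplitude_sq
  · rcases hγ.lt_or_gt with hneg | hpos
    · exact Or.inr (antitone_of_hasDerivAt_nonpos hφC fun x =>
        div_nonpos_of_nonneg_of_nonpos (h.cubicVelocity_pos (hu2 x)).le hneg.le)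
    · exact Or.inl (monotone_of_hasDerivAt_nonneg hφC fun x =>
        div_nonneg (h.cubicVelocity_pos (hu2 x)).le hpos.le)
  · obtain ⟨M, hM⟩ := isCompact_Icc.exists_bound_of_continuousOn
      (f := fun v => ((ω - ωX) * v - g * v ^ 3) / γ) (by fun_prop)
    exact ⟨M, fun x => hM (u x) (Ioo_subset_Icc_self (hmem x))⟩
  · simpa only [h.amplitude_sq] using htop.pow 2
  · simpa only [neg_sq, h.amplitude_sq] using hbot.pow 2

/-- Band 1.2: existence of dark solitons for `g > 0` and `ω > max(ωX, ωC)`,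
`γ² < ϖX·ϖC < (3/2)γ²`: antisymmetric, monotonic, bounded envelopes with far-field
amplitude `(ϖX − γ²/ϖC)/g`. -/
theorem dark_soliton_band_1_2
    (ω ωX ωC γ g : ℝ) (hγ : γ ≠ 0) (hg : 0 < g)
    (hω : ω > max ωX ωC)
    (hband₁ : γ ^ 2 < (ω - ωX) * (ω - ωC)) (hband₂ : (ω - ωX) * (ω - ωC) < (3/2) * γ ^ 2) :
    ∃ φX φC : ℝ → ℝ,
      ContDiff ℝ 1 φX ∧ ContDiff ℝ 2 φC ∧
      (∀ x : ℝ, (g * φX x ^ 2 - (ω - ωX)) * φX x + γ * φC x = 0) ∧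
      (∀ x : ℝ, -(1/2) * deriv (deriv φC) x - (ω - ωC) * φC x + γ * φX x = 0) ∧
      (∀ x : ℝ, φX (-x) = -φX x) ∧ (∀ x : ℝ, φC (-x) = -φC x) ∧
      (Monotone φX ∨ Antitone φX) ∧ (Monotone φC ∨ Antitone φC) ∧
      (∃ M : ℝ, ∀ x : ℝ, |φX x| ≤ M) ∧ (∃ M : ℝ, ∀ x : ℝ, |φC x| ≤ M) ∧
      Tendsto (fun x => φX x ^ 2) atTop (nhds (((ω - ωX) - γ ^ 2 / (ω - ωC)) / g)) ∧
      Tendsto (fun x => φX x ^ 2) atBot (nhds (((ω - ωX) - γ ^ 2 / (ω - ωC)) / g)) :=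
  dark_soliton_band_1_2_general ω ωX ωC γ g hg hω hband₁ hband₂
end

section
/- Let ω, ω_X, ω_C, γ, g be real numbers with γ ≠ 0, g < 0, ω < min(ω_X, ω_C), and ϖ_X·ϖ_C > (3/2)·γ² (band 3.1). Then there exist odd functions φ_X, φ_C : ℝ → ℝ such that: φ_C is continuously differentiable on ℝ with φ_C(0) = 0 and is twice differentiable at every x ≠ 0; the pair (φ_X, φ_C) satisfies the stationary polariton envelope equations at every x ≠ 0; φ_X(x) → √(ϖ_X/g) as x → 0 from the right (so φ_X has a jump discontinuity at 0); the function x ↦ φ_X(x)² is strictly decreasing on (0, ∞); and φ_X(x)² → (ϖ_X − γ²/ϖ_C)/g as x → +∞. -/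
/-!
Write `a = ϖ_X`, `b = ϖ_C` and `t₁ = (a - γ²/b)/g`. The first envelope equation says
`φ_C = cavity φ_X` with `cavity u = (a u - g u³)/γ`. On `x > 0` the second equation has the first
integral `(φ_C')² = (g/γ)² (φ_X² - t₁)² (γ²/g - 2 b φ_X²)`; choosing the root
`φ_C' = cavityGradient φ_X`, the chain rule turns the system into the autonomous equation
`φ_X' = -speed φ_X`. The band condition makes `speed` positive on `(√t₁, √(a/g)]` with a simple
zero at `√t₁`, so the solution issued from the root `√(a/g)` of `cavity` is defined for all
`x ≥ 0` (the travel time to `√t₁` diverges logarithmically) and tends to `√t₁`.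
Its odd extension `φ_X` jumps at `0`, while `φ_C = cavity ∘ φ_X` is odd, vanishes at `0` and has
the even continuous derivative `x ↦ cavityGradient (φ |x|)`, `φ` being the solution on `x ≥ 0`;
hence `φ_C` is `C¹`.
-/

open Filter Set Topology

section OddEven

variable {E : Type*} [NormedAddCommGroup E] {f g : ℝ → E}

theorem Function.Odd.continuousAt_zero (hf : f.Odd) (h : ContinuousWithinAt f (Ici 0) 0) :
    ContinuousAt f 0 := by
  refine continuousAt_iff_continuous_left_right.2 ⟨?_, h⟩
  have hneg : ContinuousWithinAt (fun x => -f (-x)) (Iic 0) 0 := by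
    refine (ContinuousWithinAt.comp (g := f) (t := Ici 0) ?_ continuous_neg.continuousWithinAt
      fun x hx => ?_).neg
    · simpa using h
    · simpa using hx
  simpa [hf.eq] using hneg

variable [NormedSpace ℝ E]

theorem Function.Odd.hasDerivAt_neg (hf : f.Odd) {f' : E} {x : ℝ} (h : HasDerivAt f f' x) :
    HasDerivAt f f' (-x) := by
  rw [← neg_neg x] at h
  have := (h.scomp (-x) (_root_.hasDerivAt_neg (-x))).neg
  rw [show -f ∘ Neg.neg = f from funext fun y => by simp [hf.eq]] at this
  simpa using this

theorem Function.Even.differentiableAt_neg (hf : f.Even) {x : ℝ} (h : DifferentiableAt ℝ f x) :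
    DifferentiableAt ℝ f (-x) := by
  rw [← differentiableAt_comp_neg]
  simpa [hf.eq] using h

theorem Function.Even.deriv (hf : f.Even) : (deriv f).Odd := fun x => by
  rw [← neg_neg x, ← deriv_comp_neg, neg_neg]
  simp only [hf.eq]

theorem Function.Odd.hasDerivAt_of_pos (hf : f.Odd) (hg : g.Even) (hgc : Continuous g)
    (h0 : ContinuousAt f 0) (hpos : ∀ x, 0 < x → HasDerivAt f (g x) x) (x : ℝ) :
    HasDerivAt f (g x) x := by
  have hne : ∀ y ≠ 0, HasDerivAt f (g y) y := fun y hy => by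
    rcases hy.lt_or_gt with hy | hy
    · simpa [hg.eq] using hf.hasDerivAt_neg (hpos (-y) (neg_pos.2 hy))
    · exact hpos y hy
  exact hasDerivAt_of_hasDerivAt_of_ne' hne h0 hgc.continuousAt x

end OddEven

theorem hasDerivAt_integral_of_continuousOn_Ioi {f : ℝ → ℝ} {a b u : ℝ}
    (hf : ContinuousOn f (Ioi a)) (hb : a < b) (hu : a < u) :
    HasDerivAt (fun v => ∫ s in v..b, f s) (-f u) u :=
  intervalIntegral.integral_hasDerivAt_left
    ((hf.mono fun _ hs => (lt_min hu hb).trans_le hs.1).intervalIntegrable)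
    (hf.stronglyMeasurableAtFilter isOpen_Ioi u hu) (hf.continuousAt (Ioi_mem_nhds hu))

theorem integral_inv_const_mul_sub {a b v C : ℝ} (hv : a < v) (hb : a < b) :
    ∫ s in v..b, (C * (s - a))⁻¹ = C⁻¹ * Real.log ((b - a) / (v - a)) := by
  simp_rw [mul_inv]
  rw [intervalIntegral.integral_const_mul, intervalIntegral.integral_comp_sub_right (·⁻¹),
    integral_inv_of_pos (sub_pos.2 hv) (sub_pos.2 hb)]

theorem tendsto_const_mul_log_div_sub_atTop {a b C : ℝ} (hb : a < b) (hC : 0 < C) :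
    Tendsto (fun v => C⁻¹ * Real.log ((b - a) / (v - a))) (𝓝[>] a) atTop := by
  have hsub : Tendsto (fun v => v - a) (𝓝[>] a) (𝓝[>] 0) := by
    have := (continuous_sub_right a).continuousWithinAt.tendsto_nhdsWithin (x := a)
      (s := Ioi a) (t := Ioi 0) fun v (hv : a < v) => sub_pos.2 hv
    rwa [sub_self] at this
  refine Tendsto.const_mul_atTop (inv_pos.2 hC) (Real.tendsto_log_atTop.comp ?_)
  simpa only [div_eq_mul_inv, Function.comp_def] using
    (tendsto_inv_nhdsGT_zero.comp hsub).const_mul_atTop (sub_pos.2 hb)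

theorem tendsto_integral_inv_atTop {W : ℝ → ℝ} {u₁ u₀ C : ℝ} (hu : u₁ < u₀)
    (hW : ContinuousOn W (Ioi u₁)) (hpos : ∀ u ∈ Ioi u₁, 0 < W u)
    (hle : ∀ u ∈ Ioc u₁ u₀, W u ≤ C * (u - u₁)) :
    Tendsto (fun v => ∫ s in v..u₀, (W s)⁻¹) (𝓝[>] u₁) atTop := by
  have hC : 0 < C := pos_of_mul_pos_left ((hpos u₀ hu).trans_le (hle u₀ ⟨hu, le_rfl⟩))
    (sub_pos.2 hu).le
  refine tendsto_atTop_mono' _ ?_ (tendsto_const_mul_log_div_sub_atTop hu hC)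
  filter_upwards [Ioc_mem_nhdsGT hu] with v hv
  rw [← integral_inv_const_mul_sub hv.1 hu]
  have hsub : uIcc v u₀ ⊆ Ioi u₁ := fun s hs => (lt_min hv.1 hu).trans_le hs.1
  refine intervalIntegral.integral_mono_on hv.2 ?_
    ((hW.inv₀ fun s hs => (hpos s hs).ne').mono hsub).intervalIntegrable
    fun s hs => inv_anti₀ (hpos s (hv.1.trans_le hs.1)) (hle s ⟨hv.1.trans_le hs.1, hs.2⟩)
  refine ContinuousOn.intervalIntegrable fun s hs => ?_
  exact ((continuousAt_const.mul (continuousAt_id.sub continuousAt_const)).inv₀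
    (mul_pos hC (sub_pos.2 (hsub hs))).ne').continuousWithinAt

section RightInverse

variable {f φ : ℝ → ℝ} {a b : ℝ}

theorem surjOn_Ici_of_tendsto_nhdsGT (hab : a < b) (hc : ContinuousOn f (Ioc a b))
    (htop : Tendsto f (𝓝[>] a) atTop) : SurjOn f (Ioc a b) (Ici (f b)) :=
  isPreconnected_Ioc.intermediate_value_Ici (right_mem_Ioc.2 hab)
    (le_principal_iff.2 (Ioc_mem_nhdsGT hab)) hc htop

theorem StrictAntiOn.leftInvOn_of_rightInvOn (hf : StrictAntiOn f (Ioc a b))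
    (hφ : MapsTo φ (Ici (f b)) (Ioc a b)) (hinv : RightInvOn φ f (Ici (f b))) :
    LeftInvOn φ f (Ioc a b) :=
  hf.injOn.rightInvOn_of_leftInvOn hinv
    (fun _ hu => hf.antitoneOn hu (right_mem_Ioc.2 (hu.1.trans_le hu.2)) hu.2) hφ

theorem StrictAntiOn.strictAntiOn_of_rightInvOn (hf : StrictAntiOn f (Ioc a b))
    (hφ : MapsTo φ (Ici (f b)) (Ioc a b)) (hinv : RightInvOn φ f (Ici (f b))) :
    StrictAntiOn φ (Ici (f b)) := fun x hx y hy hxy =>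
  (hf.lt_iff_gt (hφ hx) (hφ hy)).1 (by rwa [hinv hx, hinv hy])

theorem StrictAntiOn.continuousOn_of_rightInvOn (hf : StrictAntiOn f (Ioc a b))
    (hφ : MapsTo φ (Ici (f b)) (Ioc a b)) (hinv : RightInvOn φ f (Ici (f b))) :
    ContinuousOn φ (Ici (f b)) := by
  have hleft := hf.leftInvOn_of_rightInvOn hφ hinv
  have hb : b ∈ Ioc a b := right_mem_Ioc.2 ((hφ self_mem_Ici).1.trans_le (hφ self_mem_Ici).2)
  have himage : φ '' Ici (f b) = Ioc a b :=
    hφ.image_subset.antisymm fun u hu => ⟨f u, hf.antitoneOn hu hb hu.2, hleft hu⟩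
  have hanti := hf.strictAntiOn_of_rightInvOn hφ hinv
  -- an antitone map is monotone into `ℝᵒᵈ`, whose neighbourhoods are those of `ℝ`
  intro x hx
  rcases (mem_Ici.1 hx).eq_or_lt with rfl | hx
  · exact continuousWithinAt_right_of_monotoneOn_of_image_mem_nhdsWithin (β := ℝᵒᵈ)
      hanti.antitoneOn self_mem_nhdsWithin
      (by rw [himage, hleft hb]; exact Ioc_mem_nhdsLE hb.1 : φ '' Ici (f b) ∈ 𝓝[≤] φ (f b))
  · have hlt : φ x < b := by simpa [hleft hb] using hanti self_mem_Ici (mem_Ici.2 hx.le) hx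
    exact (continuousAt_of_monotoneOn_of_image_mem_nhds (β := ℝᵒᵈ) hanti.antitoneOn
      (Ici_mem_nhds hx) (by rw [himage]; exact Ioc_mem_nhds (hφ hx.le).1 hlt :
        φ '' Ici (f b) ∈ 𝓝 (φ x))).continuousWithinAt

theorem StrictAntiOn.tendsto_atTop_of_rightInvOn (hf : StrictAntiOn f (Ioc a b))
    (hφ : MapsTo φ (Ici (f b)) (Ioc a b)) (hinv : RightInvOn φ f (Ici (f b))) :
    Tendsto φ atTop (𝓝 a) := by
  have hleft := hf.leftInvOn_of_rightInvOn hφ hinv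
  have hb : b ∈ Ioc a b := right_mem_Ioc.2 ((hφ self_mem_Ici).1.trans_le (hφ self_mem_Ici).2)
  refine tendsto_order.2 ⟨fun c hc => ?_, fun c hc => ?_⟩
  · filter_upwards [eventually_ge_atTop (f b)] with x hx using hc.trans (hφ hx).1
  · have hc' : min c b ∈ Ioc a b := ⟨lt_min hc hb.1, min_le_right _ _⟩
    have hfc : f (min c b) ∈ Ici (f b) := hf.antitoneOn hc' hb hc'.2
    filter_upwards [eventually_gt_atTop (f (min c b))] with x hx
    calc φ x < φ (f (min c b)) :=
          hf.strictAntiOn_of_rightInvOn hφ hinv hfc (mem_Ici.2 (hfc.trans hx.le)) hx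
      _ = min c b := hleft hc'
      _ ≤ c := min_le_left _ _

end RightInverse

structure IsDescendingSolution (W : ℝ → ℝ) (u₁ u₀ : ℝ) (φ : ℝ → ℝ) : Prop where
  map_zero : φ 0 = u₀
  mapsTo : MapsTo φ (Ici 0) (Ioc u₁ u₀)
  strictAntiOn : StrictAntiOn φ (Ici 0)
  continuousOn : ContinuousOn φ (Ici 0)
  hasDerivAt : ∀ x, 0 < x → HasDerivAt φ (-W (φ x)) x
  tendsto_atTop : Tendsto φ atTop (𝓝 u₁)

/-- `φ` is the inverse of the travel time `v ↦ ∫ s in v..u₀, (W s)⁻¹`. -/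
theorem exists_isDescendingSolution {W : ℝ → ℝ} {u₁ u₀ C : ℝ} (hu : u₁ < u₀)
    (hW : ContinuousOn W (Ioi u₁)) (hpos : ∀ u ∈ Ioi u₁, 0 < W u)
    (hle : ∀ u ∈ Ioc u₁ u₀, W u ≤ C * (u - u₁)) :
    ∃ φ, IsDescendingSolution W u₁ u₀ φ := by
  set X := fun v => ∫ s in v..u₀, (W s)⁻¹
  have hX : X u₀ = 0 := intervalIntegral.integral_same
  have hXderiv : ∀ u ∈ Ioi u₁, HasDerivAt X (-(W u)⁻¹) u := fun u hu' =>
    hasDerivAt_integral_of_continuousOn_Ioi (hW.inv₀ fun s hs => (hpos s hs).ne') hu hu'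
  have hXcont : ContinuousOn X (Ioi u₁) := fun u hu' =>
    (hXderiv u hu').continuousAt.continuousWithinAt
  have hXanti : StrictAntiOn X (Ioc u₁ u₀) := by
    refine (strictAntiOn_of_deriv_neg (convex_Ioi u₁) hXcont fun u hu' => ?_).mono
      Ioc_subset_Ioi_self
    rw [interior_Ioi] at hu'
    simpa [(hXderiv u hu').deriv] using hpos u hu'
  have hsurj := surjOn_Ici_of_tendsto_nhdsGT hu (hXcont.mono Ioc_subset_Ioi_self)
    (tendsto_integral_inv_atTop hu hW hpos hle)
  have hφ := hsurj.mapsTo_invFunOn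
  have hinv := hsurj.rightInvOn_invFunOn
  have hcont := hXanti.continuousOn_of_rightInvOn hφ hinv
  have hanti := hXanti.strictAntiOn_of_rightInvOn hφ hinv
  have htend := hXanti.tendsto_atTop_of_rightInvOn hφ hinv
  have h0 := hXanti.leftInvOn_of_rightInvOn hφ hinv ⟨hu, le_rfl⟩
  rw [hX] at hφ hinv hcont hanti h0
  refine ⟨_, h0, hφ, hanti, hcont, fun x hx => ?_, htend⟩
  have hφx := (hφ (mem_Ici.2 hx.le)).1
  simpa using HasDerivAt.of_local_left_inverse (hcont.continuousAt (Ici_mem_nhds hx))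
    (hXderiv _ hφx) (neg_ne_zero.2 (inv_ne_zero (hpos _ hφx).ne'))
    (by filter_upwards [Ioi_mem_nhds hx] with y hy using hinv (mem_Ici.2 hy.le))

noncomputable def oddExtension (φ : ℝ → ℝ) (x : ℝ) : ℝ := Real.sign x * φ |x|

theorem oddExtension_odd (φ : ℝ → ℝ) : (oddExtension φ).Odd := fun x => by
  simp only [oddExtension, Real.sign_neg, abs_neg, neg_mul]

theorem oddExtension_of_pos (φ : ℝ → ℝ) {x : ℝ} (hx : 0 < x) : oddExtension φ x = φ x := by
  simp [oddExtension, Real.sign_of_pos hx, abs_of_pos hx]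

namespace IsDescendingSolution

variable {W φ : ℝ → ℝ} {u₁ u₀ : ℝ}

theorem tendsto_oddExtension_nhdsGT (hφ : IsDescendingSolution W u₁ u₀ φ) :
    Tendsto (oddExtension φ) (𝓝[>] 0) (𝓝 u₀) := by
  have := (hφ.continuousOn 0 self_mem_Ici).mono Ioi_subset_Ici_self
  rw [ContinuousWithinAt, hφ.map_zero] at this
  exact this.congr' (eventually_nhdsWithin_of_forall fun x hx => (oddExtension_of_pos φ hx).symm)

theorem strictAntiOn_sq_oddExtension (hφ : IsDescendingSolution W u₁ u₀ φ) (hu₁ : 0 ≤ u₁) :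
    StrictAntiOn (fun x => oddExtension φ x ^ 2) (Ioi 0) := fun x hx y hy hxy => by
  simp only [oddExtension_of_pos φ hx, oddExtension_of_pos φ hy]
  exact pow_lt_pow_left₀ (hφ.strictAntiOn (mem_Ici.2 hx.le) (mem_Ici.2 hy.le) hxy)
    (hu₁.trans (hφ.mapsTo (mem_Ici.2 hy.le)).1.le) two_ne_zero

theorem tendsto_sq_oddExtension_atTop (hφ : IsDescendingSolution W u₁ u₀ φ) :
    Tendsto (fun x => oddExtension φ x ^ 2) atTop (𝓝 (u₁ ^ 2)) := by
  refine (hφ.tendsto_atTop.pow 2).congr' ?_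
  filter_upwards [eventually_gt_atTop 0] with x hx
  rw [oddExtension_of_pos φ hx]

end IsDescendingSolution

noncomputable def cavity (a g γ u : ℝ) : ℝ := (a * u - g * u ^ 3) / γ

noncomputable def farFieldSq (a b g γ : ℝ) : ℝ := (a - γ ^ 2 / b) / g

/-- `φ_C'` along a soliton as a function of `u = φ_X`: a square root of the first integral
`(φ_C')² = (g/γ)² (u² - t₁)² (γ²/g - 2 b u²)` of the second envelope equation. -/
noncomputable def cavityGradient (a b g γ u : ℝ) : ℝ :=
  g / γ * (u ^ 2 - farFieldSq a b g γ) * √(γ ^ 2 / g - 2 * b * u ^ 2)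

/-- `-φ_X'` along a soliton as a function of `u = φ_X`, from the chain rule
`cavityGradient u = cavity' u * φ_X'`. -/
noncomputable def speed (a b g γ u : ℝ) : ℝ :=
  -g * (u ^ 2 - farFieldSq a b g γ) * √(γ ^ 2 / g - 2 * b * u ^ 2) / (a - 3 * g * u ^ 2)

/-- Band 3.1, with `a = ϖ_X` and `b = ϖ_C`. -/
structure Band31 (a b g γ : ℝ) : Prop where
  b_neg : b < 0
  g_neg : g < 0
  γ_ne : γ ≠ 0
  band : 3 / 2 * γ ^ 2 < a * b

theorem cavity_spec (a g γ u : ℝ) (hγ : γ ≠ 0) : (g * u ^ 2 - a) * u + γ * cavity a g γ u = 0 := by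
  unfold cavity; field_simp; ring

theorem hasDerivAt_cavity (a g γ u : ℝ) :
    HasDerivAt (cavity a g γ) ((a - 3 * g * u ^ 2) / γ) u := by
  refine ((((hasDerivAt_id' u).const_mul a).sub ((hasDerivAt_pow 3 u).const_mul g)).div_const
    γ).congr_deriv ?_
  push_cast
  ring

theorem cavity_odd (a g γ : ℝ) : (cavity a g γ).Odd := fun u => by
  unfold cavity; ring

theorem cavity_sqrt_div {a g : ℝ} (γ : ℝ) (hg : g ≠ 0) (h : 0 ≤ a / g) :
    cavity a g γ √(a / g) = 0 := by
  have hsq := Real.sq_sqrt h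
  unfold cavity
  rw [show a * √(a / g) - g * √(a / g) ^ 3 = √(a / g) * (a - g * √(a / g) ^ 2) by ring, hsq,
    mul_div_cancel₀ a hg, sub_self, mul_zero, zero_div]

namespace Band31

variable {a b g γ : ℝ} {φ : ℝ → ℝ}

local notation "t₁" => farFieldSq a b g γ

theorem farFieldSq_pos (h : Band31 a b g γ) : 0 < t₁ := by
  have := h.band; have := h.b_neg; have := h.g_neg
  have hγ : 0 < γ ^ 2 := by have := h.γ_ne; positivity
  unfold farFieldSq
  refine div_pos_of_neg_of_neg ?_ h.g_neg
  rw [sub_neg, lt_div_iff_of_neg h.b_neg]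
  nlinarith

theorem farFieldSq_lt (h : Band31 a b g γ) : t₁ < a / g := by
  unfold farFieldSq
  rw [div_lt_div_right_of_neg h.g_neg]
  have : γ ^ 2 / b < 0 := div_neg_of_pos_of_neg (by have := h.γ_ne; positivity) h.b_neg
  linarith

theorem radicand_pos (h : Band31 a b g γ) {u : ℝ} (hu : t₁ ≤ u ^ 2) :
    0 < γ ^ 2 / g - 2 * b * u ^ 2 := by
  have hb := h.b_neg; have hg := h.g_neg; have := h.band
  have := hb.ne; have := hg.ne
  have key : γ ^ 2 / g - 2 * b * t₁ = (3 * γ ^ 2 - 2 * (a * b)) / g := by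
    unfold farFieldSq; field_simp; ring
  have : 0 < (3 * γ ^ 2 - 2 * (a * b)) / g := div_pos_of_neg_of_neg (by linarith) hg
  nlinarith

theorem cavity_deriv_pos (h : Band31 a b g γ) {u : ℝ} (hu : t₁ ≤ u ^ 2) :
    0 < a - 3 * g * u ^ 2 := by
  have hb := h.b_neg; have hg := h.g_neg; have := h.band
  have := hb.ne; have := hg.ne
  have key : a - 3 * g * t₁ = (3 * γ ^ 2 - 2 * (a * b)) / b := by
    unfold farFieldSq; field_simp; ring
  have : 0 < (3 * γ ^ 2 - 2 * (a * b)) / b := div_pos_of_neg_of_neg (by linarith) hb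
  nlinarith

theorem speed_pos (h : Band31 a b g γ) {u : ℝ} (hu : t₁ < u ^ 2) : 0 < speed a b g γ u :=
  div_pos (mul_pos (mul_pos (neg_pos.2 h.g_neg) (sub_pos.2 hu))
    (Real.sqrt_pos.2 (h.radicand_pos hu.le))) (h.cavity_deriv_pos hu.le)

theorem continuousOn_speed (h : Band31 a b g γ) : ContinuousOn (speed a b g γ) (Ioi √t₁) := by
  refine ContinuousOn.div (by fun_prop) (by fun_prop) fun u hu => ?_
  exact (h.cavity_deriv_pos (Real.lt_sq_of_sqrt_lt hu).le).ne'

theorem cavity_deriv_mul_speed (h : Band31 a b g γ) {u : ℝ} (hu : t₁ ≤ u ^ 2) :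
    (a - 3 * g * u ^ 2) / γ * -speed a b g γ u = cavityGradient a b g γ u := by
  have := (h.cavity_deriv_pos hu).ne'
  have := h.γ_ne
  unfold speed cavityGradient
  field_simp

theorem exists_speed_le (h : Band31 a b g γ) (c : ℝ) :
    ∃ C, ∀ u ∈ Ioc √t₁ c, speed a b g γ u ≤ C * (u - √t₁) := by
  have ht := Real.sq_sqrt h.farFieldSq_pos.le
  set q := fun u => -g * (u + √t₁) * √(γ ^ 2 / g - 2 * b * u ^ 2) / (a - 3 * g * u ^ 2)
  have hq : ContinuousOn q (Icc √t₁ c) := by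
    refine ContinuousOn.div (by fun_prop) (by fun_prop) fun u hu => ?_
    refine (h.cavity_deriv_pos ?_).ne'
    simpa [ht] using pow_le_pow_left₀ (Real.sqrt_nonneg _) hu.1 2
  obtain ⟨C, hC⟩ := isCompact_Icc.exists_bound_of_continuousOn hq
  refine ⟨C, fun u hu => ?_⟩
  have hfactor : speed a b g γ u = (u - √t₁) * q u := by
    have : u ^ 2 - t₁ = (u - √t₁) * (u + √t₁) := by linear_combination ht
    unfold speed; rw [this]; ring
  calc speed a b g γ u = (u - √t₁) * q u := hfactor
    _ ≤ (u - √t₁) * C := mul_le_mul_of_nonneg_left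
        ((le_abs_self _).trans (hC u ⟨hu.1.le, hu.2⟩)) (sub_pos.2 hu.1).le
    _ = C * (u - √t₁) := mul_comm _ _

/-- The second envelope equation `φ_C'' = 2 (γ φ_X - b φ_C)` divided by `φ_X' = -speed φ_X`. -/
theorem hasDerivAt_cavityGradient (h : Band31 a b g γ) {u : ℝ} (hu : t₁ < u ^ 2) :
    HasDerivAt (cavityGradient a b g γ) (2 * (b * cavity a g γ u - γ * u) / speed a b g γ u) u := by
  have hD := h.radicand_pos hu.le
  have hraw := (((hasDerivAt_pow 2 u).sub_const t₁).const_mul (g / γ)).mul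
    ((((hasDerivAt_pow 2 u).const_mul (2 * b)).const_sub (γ ^ 2 / g)).sqrt hD.ne')
  refine hraw.congr_deriv ?_
  have := h.g_neg.ne
  have hT : b * g * t₁ = a * b - γ ^ 2 := by
    have := h.b_neg.ne; unfold farFieldSq; field_simp
  have hS : g * √(γ ^ 2 / g - 2 * b * u ^ 2) ^ 2 = γ ^ 2 - 2 * b * g * u ^ 2 := by
    rw [Real.sq_sqrt hD.le]; field_simp
  have := (Real.sqrt_pos.2 hD).ne'
  have := (h.cavity_deriv_pos hu.le).ne'
  have := h.γ_ne; have := (sub_pos.2 hu).ne'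
  unfold speed cavity
  set S := √(γ ^ 2 / g - 2 * b * u ^ 2)
  simp only [Nat.cast_ofNat, pow_one, Nat.add_one_sub_one]
  field_simp
  linear_combination (u * g * (u ^ 2 - t₁)) * hS
    + (u * (g * (u ^ 2 - t₁) - (a - 3 * g * u ^ 2))) * hT

theorem exists_isDescendingSolution (h : Band31 a b g γ) :
    ∃ φ, IsDescendingSolution (speed a b g γ) √t₁ √(a / g) φ :=
  have ⟨_, hC⟩ := h.exists_speed_le √(a / g)
  _root_.exists_isDescendingSolution (Real.sqrt_lt_sqrt h.farFieldSq_pos.le h.farFieldSq_lt)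
    h.continuousOn_speed (fun _ hu => h.speed_pos (Real.lt_sq_of_sqrt_lt hu)) hC

theorem farFieldSq_lt_sq (hφ : IsDescendingSolution (speed a b g γ) √t₁ √(a / g) φ) {x : ℝ}
    (hx : 0 ≤ x) : t₁ < φ x ^ 2 :=
  Real.lt_sq_of_sqrt_lt (hφ.mapsTo (mem_Ici.2 hx)).1

theorem continuousAt_cavity_comp_oddExtension (h : Band31 a b g γ)
    (hφ : IsDescendingSolution (speed a b g γ) √t₁ √(a / g) φ) :
    ContinuousAt (cavity a g γ ∘ oddExtension φ) 0 := by
  refine ((cavity_odd a g γ).comp_odd (oddExtension_odd φ)).continuousAt_zero ?_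
  have hroot : cavity a g γ (φ 0) = 0 := by
    rw [hφ.map_zero]
    exact cavity_sqrt_div γ h.g_neg.ne (h.farFieldSq_pos.trans h.farFieldSq_lt).le
  have hEq : EqOn (cavity a g γ ∘ φ) (cavity a g γ ∘ oddExtension φ) (Ici 0) := fun x hx => by
    rcases (mem_Ici.1 hx).eq_or_lt with rfl | hx
    · rw [Function.comp_apply, Function.comp_apply, hroot, (oddExtension_odd φ).map_zero,
        (cavity_odd a g γ).map_zero]
    · simp [oddExtension_of_pos φ hx]
  exact ((hasDerivAt_cavity a g γ _).continuousAt.comp_continuousWithinAt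
    (hφ.continuousOn 0 self_mem_Ici)).congr_of_mem hEq.symm self_mem_Ici

theorem continuous_cavityGradient_comp_abs
    (hφ : IsDescendingSolution (speed a b g γ) √t₁ √(a / g) φ) :
    Continuous fun x => cavityGradient a b g γ (φ |x|) := by
  have hG : Continuous (cavityGradient a b g γ) := by unfold cavityGradient; fun_prop
  exact hG.comp (hφ.continuousOn.comp_continuous continuous_abs fun x => abs_nonneg x)

theorem hasDerivAt_cavity_comp_oddExtension (h : Band31 a b g γ)
    (hφ : IsDescendingSolution (speed a b g γ) √t₁ √(a / g) φ) (x : ℝ) :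
    HasDerivAt (cavity a g γ ∘ oddExtension φ) (cavityGradient a b g γ (φ |x|)) x := by
  refine ((cavity_odd a g γ).comp_odd (oddExtension_odd φ)).hasDerivAt_of_pos
    (fun x => by simp only [abs_neg]) (continuous_cavityGradient_comp_abs hφ)
    (h.continuousAt_cavity_comp_oddExtension hφ) (fun x hx => ?_) x
  have hd := (hasDerivAt_cavity a g γ (φ x)).comp x (hφ.hasDerivAt x hx)
  rw [h.cavity_deriv_mul_speed (farFieldSq_lt_sq hφ hx.le).le] at hd
  rw [abs_of_pos hx]
  refine hd.congr_of_eventuallyEq ?_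
  filter_upwards [Ioi_mem_nhds hx] with y hy
  simp [oddExtension_of_pos φ hy]

theorem deriv_cavity_comp_oddExtension (h : Band31 a b g γ)
    (hφ : IsDescendingSolution (speed a b g γ) √t₁ √(a / g) φ) :
    deriv (cavity a g γ ∘ oddExtension φ) = fun x => cavityGradient a b g γ (φ |x|) :=
  funext fun x => (h.hasDerivAt_cavity_comp_oddExtension hφ x).deriv

theorem contDiff_cavity_comp_oddExtension (h : Band31 a b g γ)
    (hφ : IsDescendingSolution (speed a b g γ) √t₁ √(a / g) φ) :
    ContDiff ℝ 1 (cavity a g γ ∘ oddExtension φ) :=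
  contDiff_one_iff_deriv.2 ⟨fun x => (h.hasDerivAt_cavity_comp_oddExtension hφ x).differentiableAt,
    h.deriv_cavity_comp_oddExtension hφ ▸ continuous_cavityGradient_comp_abs hφ⟩

theorem hasDerivAt_cavityGradient_comp_abs (h : Band31 a b g γ)
    (hφ : IsDescendingSolution (speed a b g γ) √t₁ √(a / g) φ) {x : ℝ} (hx : 0 < x) :
    HasDerivAt (fun y => cavityGradient a b g γ (φ |y|))
      (2 * (γ * φ x - b * cavity a g γ (φ x))) x := by
  have hd := (h.hasDerivAt_cavityGradient (farFieldSq_lt_sq hφ hx.le)).comp x (hφ.hasDerivAt x hx)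
  have := (h.speed_pos (farFieldSq_lt_sq hφ hx.le)).ne'
  refine (hd.congr_deriv (by field_simp; ring)).congr_of_eventuallyEq ?_
  filter_upwards [Ioi_mem_nhds hx] with y (hy : 0 < y)
  simp [abs_of_pos hy]

theorem differentiableAt_deriv_cavity_comp_oddExtension (h : Band31 a b g γ)
    (hφ : IsDescendingSolution (speed a b g γ) √t₁ √(a / g) φ) {x : ℝ} (hx : x ≠ 0) :
    DifferentiableAt ℝ (deriv (cavity a g γ ∘ oddExtension φ)) x := by
  rw [h.deriv_cavity_comp_oddExtension hφ]
  rcases hx.lt_or_gt with hx | hx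
  · have heven : Function.Even fun y => cavityGradient a b g γ (φ |y|) := fun y => by
      simp only [abs_neg]
    simpa using heven.differentiableAt_neg
      (h.hasDerivAt_cavityGradient_comp_abs hφ (neg_pos.2 hx)).differentiableAt
  · exact (h.hasDerivAt_cavityGradient_comp_abs hφ hx).differentiableAt

theorem second_envelope_eq (h : Band31 a b g γ)
    (hφ : IsDescendingSolution (speed a b g γ) √t₁ √(a / g) φ) {x : ℝ} (hx : x ≠ 0) :
    -(1 / 2) * deriv (deriv (cavity a g γ ∘ oddExtension φ)) x
      - b * (cavity a g γ ∘ oddExtension φ) x + γ * oddExtension φ x = 0 := by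
  set φC := cavity a g γ ∘ oddExtension φ
  have hφC : φC.Odd := (cavity_odd a g γ).comp_odd (oddExtension_odd φ)
  have hdd : (deriv (deriv φC)).Odd := by
    rw [h.deriv_cavity_comp_oddExtension hφ]
    exact Function.Even.deriv fun y => by simp only [abs_neg]
  set R := fun x => -(1 / 2) * deriv (deriv φC) x - b * φC x + γ * oddExtension φ x
  have hR : R.Odd := fun x => by
    simp only [R, hdd.eq, hφC.eq, (oddExtension_odd φ).eq]
    ring
  have hpos : ∀ x, 0 < x → R x = 0 := fun x hx => by
    simp only [R, h.deriv_cavity_comp_oddExtension hφ,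
      (h.hasDerivAt_cavityGradient_comp_abs hφ hx).deriv, φC, Function.comp_apply,
      oddExtension_of_pos φ hx]
    ring
  rcases hx.lt_or_gt with hx | hx
  · have := hR (-x)
    rwa [neg_neg, hpos (-x) (neg_pos.2 hx), neg_zero] at this
  · exact hpos x hx

end Band31

/-- Band 3.1: existence of discontinuous solitons for `g < 0`, `ω < min(ωX, ωC)`,
`ϖX·ϖC > (3/2)γ²`: antisymmetric envelopes, `φC` continuously differentiable and twice
differentiable away from `0`, satisfying the envelope equations away from `0`; `φX` jumps
at `0` with right limit `√(ϖX/g)`, `φX²` strictly decreasing on `(0,∞)` with far-field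
value `(ϖX − γ²/ϖC)/g`. -/
theorem discontinuous_soliton_band_3_1
    (ω ωX ωC γ g : ℝ) (hγ : γ ≠ 0) (hg : g < 0)
    (hω : ω < min ωX ωC)
    (hband : (ω - ωX) * (ω - ωC) > (3/2) * γ ^ 2) :
    ∃ φX φC : ℝ → ℝ,
      (∀ x : ℝ, φX (-x) = -φX x) ∧ (∀ x : ℝ, φC (-x) = -φC x) ∧
      ContDiff ℝ 1 φC ∧ φC 0 = 0 ∧
      (∀ x : ℝ, x ≠ 0 → DifferentiableAt ℝ (deriv φC) x) ∧
      (∀ x : ℝ, x ≠ 0 →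
        (g * φX x ^ 2 - (ω - ωX)) * φX x + γ * φC x = 0 ∧
        -(1/2) * deriv (deriv φC) x - (ω - ωC) * φC x + γ * φX x = 0) ∧
      Tendsto φX (nhdsWithin 0 (Set.Ioi 0)) (nhds (Real.sqrt ((ω - ωX) / g))) ∧
      StrictAntiOn (fun x => φX x ^ 2) (Set.Ioi 0) ∧
      Tendsto (fun x => φX x ^ 2) atTop (nhds (((ω - ωX) - γ ^ 2 / (ω - ωC)) / g)) := by
  have h : Band31 (ω - ωX) (ω - ωC) g γ :=
    ⟨sub_neg.2 (lt_min_iff.1 hω).2, hg, hγ, hband⟩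
  obtain ⟨φ, hφ⟩ := h.exists_isDescendingSolution
  have hC := (cavity_odd (ω - ωX) g γ).comp_odd (oddExtension_odd φ)
  refine ⟨oddExtension φ, cavity (ω - ωX) g γ ∘ oddExtension φ, oddExtension_odd φ, hC,
    h.contDiff_cavity_comp_oddExtension hφ, hC.map_zero,
    fun x hx => h.differentiableAt_deriv_cavity_comp_oddExtension hφ hx,
    fun x hx => ⟨cavity_spec _ _ _ _ hγ, h.second_envelope_eq hφ hx⟩,
    hφ.tendsto_oddExtension_nhdsGT, hφ.strictAntiOn_sq_oddExtension (Real.sqrt_nonneg _), ?_⟩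
  have := hφ.tendsto_sq_oddExtension_atTop
  rw [Real.sq_sqrt h.farFieldSq_pos.le] at this
  exact this
end

section
/- Let ϖ_X, ϖ_C, γ be real numbers and let k be real; set β = k² − ϖ_C. Then every complex number s satisfying s⁴ + (ϖ_X² + β² + 2γ²)·s² + (γ² + ϖ_X·β)² = 0 is purely imaginary (its real part is zero). Hence the zero far field of the bright solitons (far-field value ζ = 0, for which α = −ϖ_X) is linearly stable at every mode k. -/
/-- Stability of the zero far field (bright solitons): every complex root of the
far-field dispersion quartic at `ζ = 0` (where `α = −ϖX`) is purely imaginary. -/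
theorem zero_far_field_stable (ϖX ϖC γ k : ℝ) :
    ∀ s : ℂ,
      s ^ 4 + ((ϖX ^ 2 + (k ^ 2 - ϖC) ^ 2 + 2 * γ ^ 2 : ℝ) : ℂ) * s ^ 2
        + (((γ ^ 2 + ϖX * (k ^ 2 - ϖC)) ^ 2 : ℝ) : ℂ) = 0 →
      s.re = 0 := by
  intro s hs
  set β := k ^ 2 - ϖC with hβ
  set b := ϖX ^ 2 + β ^ 2 + 2 * γ ^ 2 with hb
  set c := (γ ^ 2 + ϖX * β) ^ 2 with hc
  have hbnn : 0 ≤ b := by positivity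
  have hcnn : 0 ≤ c := by positivity
  have hd : 4 * c ≤ b ^ 2 := by
    nlinarith [sq_nonneg (ϖX - β), sq_nonneg (ϖX + β), sq_nonneg γ,
      sq_nonneg ((ϖX - β) * (ϖX + β)), sq_nonneg ((ϖX - β) * γ)]
  set x := s.re with hx
  set y := s.im with hy
  rw [Complex.ext_iff] at hs
  obtain ⟨hre, him⟩ := hs
  simp only [pow_succ, pow_zero, one_mul, Complex.mul_re, Complex.mul_im,
    Complex.add_re, Complex.add_im, Complex.ofReal_re, Complex.ofReal_im,
    Complex.zero_re, Complex.zero_im, ← hx, ← hy] at hre him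
  -- hre : x^4 - 6x²y² + y^4 + b(x²−y²) + c = 0
  -- him : 2xy(2x²−2y²+b) = 0
  by_contra hxne
  have him' : y * (2 * x ^ 2 - 2 * y ^ 2 + b) = 0 := by
    have : x * (y * (2 * x ^ 2 - 2 * y ^ 2 + b)) = 0 := by ring_nf; ring_nf at him; linarith
    rcases mul_eq_zero.mp this with h | h
    · exact absurd h hxne
    · exact h
  rcases mul_eq_zero.mp him' with h | h
  · -- y = 0
    have hx2 : 0 < x ^ 2 := by positivity
    have hre' : x ^ 4 + b * x ^ 2 + c = 0 := by
      rw [h] at hre; ring_nf at hre ⊢; linarith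
    nlinarith [hre', mul_nonneg hbnn hx2.le, pow_pos hx2 2]
  · -- 2x² − 2y² + b = 0
    have hy2 : y ^ 2 = x ^ 2 + b / 2 := by linarith
    have hx2 : 0 < x ^ 2 := by positivity
    have hre2 : x ^ 4 - 6 * x ^ 2 * y ^ 2 + y ^ 4 + b * x ^ 2 - b * y ^ 2 + c = 0 := by
      ring_nf at hre ⊢; linarith
    have hy4 : y ^ 4 = (x ^ 2 + b / 2) ^ 2 := by
      rw [show y ^ 4 = (y ^ 2) ^ 2 by ring, hy2]
    have hre' : c - 4 * x ^ 4 - 2 * b * x ^ 2 - b ^ 2 / 4 = 0 := by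
      linear_combination hre2 + (6 * x ^ 2 + b) * hy2 - hy4
    nlinarith [hre', mul_nonneg hbnn hx2.le, pow_pos hx2 2]
end

section
/- Let ϖ_X, ϖ_C, γ be real numbers with γ ≠ 0, ϖ_C < 0, and ϖ_X·ϖ_C ≤ γ². Set ζ = ϖ_X − γ²/ϖ_C and α = 2ζ − ϖ_X. Then for every real k, every complex root s of the far-field dispersion quartic D(k,s) = 0 is purely imaginary (its real part is zero). Hence the far fields of the solitons in bands 1.1 and 3.2 are linearly stable at every mode k. -/
/-!
Writing `t = s²`, the quartic `D(k, s)` is a real quadratic in `t`; its roots `s` are purely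
imaginary exactly when both roots `t` are real and nonpositive, i.e. when both coefficients
and the discriminant are nonnegative. The constant coefficient factors as
`(γ² − (α + ζ)β)(γ² − (α − ζ)β)` and the discriminant equals
`(α² − ζ² − β²)² + 4γ²((α + β)² − ζ²)`, so all three signs follow from
`0 ≤ ζ ≤ α`, `0 ≤ β` and `γ² ≤ (α − ζ)β`. On bands 1.1 and 3.2 one has `α − ζ = −γ²/ϖC ≥ 0`,
`ζ ≥ 0` is the condition `η ≤ 1`, and `(α − ζ)β = γ² − γ²k²/ϖC ≥ γ²`.
-/

lemma Complex.re_eq_zero_of_sq_eq_ofReal_of_nonpos {s : ℂ} {r : ℝ} (hr : r ≤ 0)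
    (h : s ^ 2 = r) : s.re = 0 := by
  have hre : s.re ^ 2 - s.im ^ 2 = r := by simpa [pow_two] using congrArg Complex.re h
  have him : s.re * s.im * 2 = 0 := by simpa [pow_two, mul_comm] using congrArg Complex.im h
  rcases mul_eq_zero.mp (mul_eq_zero.mp him |>.resolve_right two_ne_zero) with h0 | h0
  · exact h0
  · exact pow_eq_zero_iff two_ne_zero |>.mp (by nlinarith [sq_nonneg s.re])

lemma Complex.re_eq_zero_of_biquadratic_eq_zero {b c : ℝ} (hb : 0 ≤ b) (hc : 0 ≤ c)
    (hdisc : 4 * c ≤ b ^ 2) {s : ℂ} (h : s ^ 4 + (b : ℂ) * s ^ 2 + (c : ℂ) = 0) :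
    s.re = 0 := by
  set d := √(b ^ 2 - 4 * c)
  have hd : 0 ≤ d := Real.sqrt_nonneg _
  have hdsq : d ^ 2 = b ^ 2 - 4 * c := Real.sq_sqrt (by linarith)
  have hdb : d ≤ b := by nlinarith
  have hdsqC : (d : ℂ) ^ 2 = (b : ℂ) ^ 2 - 4 * c := by exact_mod_cast hdsq
  have hfactor : (s ^ 2 - ((d - b) / 2 : ℝ)) * (s ^ 2 - ((-d - b) / 2 : ℝ)) = 0 := by
    push_cast
    linear_combination h - (1 / 4 : ℂ) * hdsqC
  rcases mul_eq_zero.mp hfactor with hroot | hroot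
  · exact re_eq_zero_of_sq_eq_ofReal_of_nonpos (by linarith) (sub_eq_zero.mp hroot)
  · exact re_eq_zero_of_sq_eq_ofReal_of_nonpos (by linarith) (sub_eq_zero.mp hroot)

/-- `D(k, s)` with `β = k² − ϖC` and the far-field value `ζ` kept as free parameters. -/
def dispersionQuartic (α β γ ζ : ℝ) (s : ℂ) : ℂ :=
  s ^ 4 + ((α ^ 2 + β ^ 2 + 2 * γ ^ 2 - ζ ^ 2 : ℝ) : ℂ) * s ^ 2
    + ((γ ^ 4 - 2 * α * β * γ ^ 2 + (α ^ 2 - ζ ^ 2) * β ^ 2 : ℝ) : ℂ)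

theorem re_eq_zero_of_dispersionQuartic_eq_zero {α β γ ζ : ℝ} (hζ : 0 ≤ ζ) (hζα : ζ ≤ α)
    (hβ : 0 ≤ β) (hγ : γ ^ 2 ≤ (α - ζ) * β) {s : ℂ} (h : dispersionQuartic α β γ ζ s = 0) :
    s.re = 0 := by
  refine Complex.re_eq_zero_of_biquadratic_eq_zero ?_ ?_ ?_ h
  · nlinarith [sq_nonneg β, sq_nonneg γ]
  · have hconst : γ ^ 4 - 2 * α * β * γ ^ 2 + (α ^ 2 - ζ ^ 2) * β ^ 2
        = (γ ^ 2 - (α + ζ) * β) * (γ ^ 2 - (α - ζ) * β) := by ring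
    rw [hconst]
    exact mul_nonneg_of_nonpos_of_nonpos (by nlinarith) (by linarith)
  · have hdiscr : (α ^ 2 + β ^ 2 + 2 * γ ^ 2 - ζ ^ 2) ^ 2
          - 4 * (γ ^ 4 - 2 * α * β * γ ^ 2 + (α ^ 2 - ζ ^ 2) * β ^ 2)
        = (α ^ 2 - ζ ^ 2 - β ^ 2) ^ 2 + 4 * γ ^ 2 * ((α + β) ^ 2 - ζ ^ 2) := by ring
    have hζαβ : ζ ^ 2 ≤ (α + β) ^ 2 := pow_le_pow_left₀ hζ (by linarith) 2
    nlinarith [sq_nonneg (α ^ 2 - ζ ^ 2 - β ^ 2), sq_nonneg γ,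
      mul_nonneg (sq_nonneg γ) (sub_nonneg.mpr hζαβ)]

theorem far_field_stable_bands_1_1_and_3_2_general
    (ϖX ϖC γ : ℝ) (hϖC : ϖC < 0) (hη : ϖX * ϖC ≤ γ ^ 2) :
    ∀ k : ℝ, ∀ s : ℂ,
      s ^ 4
        + ((((2 * (ϖX - γ ^ 2 / ϖC) - ϖX) ^ 2 + (k ^ 2 - ϖC) ^ 2 + 2 * γ ^ 2
            - (ϖX - γ ^ 2 / ϖC) ^ 2 : ℝ)) : ℂ) * s ^ 2
        + (((γ ^ 4 - 2 * (2 * (ϖX - γ ^ 2 / ϖC) - ϖX) * (k ^ 2 - ϖC) * γ ^ 2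
            + ((2 * (ϖX - γ ^ 2 / ϖC) - ϖX) ^ 2 - (ϖX - γ ^ 2 / ϖC) ^ 2)
              * (k ^ 2 - ϖC) ^ 2 : ℝ)) : ℂ) = 0 →
      s.re = 0 := by
  intro k s
  have hu : γ ^ 2 / ϖC ≤ 0 := div_nonpos_of_nonneg_of_nonpos (sq_nonneg γ) hϖC.le
  have huϖC : γ ^ 2 / ϖC * ϖC = γ ^ 2 := div_mul_cancel₀ _ hϖC.ne
  have hζ : 0 ≤ ϖX - γ ^ 2 / ϖC := sub_nonneg.mpr ((div_le_iff_of_neg hϖC).mpr hη)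
  refine re_eq_zero_of_dispersionQuartic_eq_zero hζ (by linarith)
    (by nlinarith [sq_nonneg k]) ?_
  nlinarith [mul_nonneg (neg_nonneg.mpr hu) (sq_nonneg k)]

/-- Stability of the far fields of bands 1.1 and 3.2: for `ϖC < 0` and `ϖX·ϖC ≤ γ²`
(i.e. `η ≤ 1`), every complex root of the far-field dispersion quartic at
`ζ = ϖX − γ²/ϖC`, `α = 2ζ − ϖX`, is purely imaginary. -/
theorem far_field_stable_bands_1_1_and_3_2
    (ϖX ϖC γ : ℝ) (hγ : γ ≠ 0) (hϖC : ϖC < 0) (hη : ϖX * ϖC ≤ γ ^ 2) :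
    ∀ k : ℝ, ∀ s : ℂ,
      s ^ 4
        + ((((2 * (ϖX - γ ^ 2 / ϖC) - ϖX) ^ 2 + (k ^ 2 - ϖC) ^ 2 + 2 * γ ^ 2
            - (ϖX - γ ^ 2 / ϖC) ^ 2 : ℝ)) : ℂ) * s ^ 2
        + (((γ ^ 4 - 2 * (2 * (ϖX - γ ^ 2 / ϖC) - ϖX) * (k ^ 2 - ϖC) * γ ^ 2
            + ((2 * (ϖX - γ ^ 2 / ϖC) - ϖX) ^ 2 - (ϖX - γ ^ 2 / ϖC) ^ 2)
              * (k ^ 2 - ϖC) ^ 2 : ℝ)) : ℂ) = 0 →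
      s.re = 0 :=
  far_field_stable_bands_1_1_and_3_2_general ϖX ϖC γ hϖC hη
end

section
/- Let ϖ_X, ϖ_C, γ be real numbers with γ ≠ 0 and ϖ_C ≠ 0. Set η = ϖ_X·ϖ_C/γ², ζ = ϖ_X − γ²/ϖ_C, and α = 2ζ − ϖ_X. Then the inequality (γ² − (α + ζ)·(k² − ϖ_C))·(γ² − (α − ζ)·(k² − ϖ_C)) ≥ 0 holds for all real k if and only if either (ϖ_C < 0 and η ≤ 1) or (ϖ_C > 0 and 1 ≤ η ≤ 3/2). -/
/-!
Substituting `ζ = ϖX − γ²/ϖC` and `η = ϖX ϖC / γ²`, the second factor collapses to `γ² k² / ϖC`,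
and the product becomes `γ⁴/ϖC² · k² (2 ϖC (η − 1) − (2η − 3) k²)`. A function
`t ↦ t (a − b t)` is nonnegative on `t ≥ 0` exactly when `a ≥ 0` (small `t`) and `b ≤ 0`
(large `t`), which for `a = 2 ϖC (η − 1)`, `b = 2η − 3` splits according to the sign of `ϖC`.
-/

theorem forall_nonneg_mul_sub_mul_nonneg_iff {K : Type*} [Field K] [LinearOrder K]
    [IsStrictOrderedRing K] {a b : K} :
    (∀ t, 0 ≤ t → 0 ≤ t * (a - b * t)) ↔ 0 ≤ a ∧ b ≤ 0 := by
  constructor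
  · intro h
    constructor
    · by_contra! ha
      have hd : 0 < |b| + 1 := by positivity
      set t := -a / (|b| + 1) with ht_def
      have ht : 0 < t := div_pos (neg_pos.2 ha) hd
      have htd : |b| * t + t = -a := by rw [ht_def]; field_simp; ring
      have hbt : -|b| * t ≤ b * t := mul_le_mul_of_nonneg_right (neg_abs_le b) ht.le
      have := h t ht.le
      nlinarith
    · by_contra! hb
      set t := (|a| + 1) / b with ht_def
      have ht : 0 < t := div_pos (by positivity) hb
      have hbt : b * t = |a| + 1 := by rw [ht_def]; field_simp
      have := h t ht.le
      nlinarith [le_abs_self a]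
  · rintro ⟨ha, hb⟩ t ht
    exact mul_nonneg ht (by nlinarith)

theorem Real.forall_sq_mul_sub_mul_sq_nonneg_iff {a b : ℝ} :
    (∀ k : ℝ, 0 ≤ k ^ 2 * (a - b * k ^ 2)) ↔ 0 ≤ a ∧ b ≤ 0 := by
  rw [← forall_nonneg_mul_sub_mul_nonneg_iff]
  refine ⟨fun h t ht => ?_, fun h k => h _ (sq_nonneg k)⟩
  simpa [Real.sq_sqrt ht] using h √t

theorem stability_regimes_iff {c η : ℝ} (hc : c ≠ 0) :
    (0 ≤ 2 * c * (η - 1) ∧ 2 * η - 3 ≤ 0) ↔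
      (c < 0 ∧ η ≤ 1) ∨ (c > 0 ∧ 1 ≤ η ∧ η ≤ 3 / 2) := by
  rcases hc.lt_or_gt with hc | hc
  · have : 0 ≤ 2 * c * (η - 1) ↔ η ≤ 1 := by
      rw [show 2 * c * (η - 1) = (2 * -c) * (1 - η) by ring]
      rw [mul_nonneg_iff_of_pos_left (by linarith), sub_nonneg]
    rw [this]
    constructor
    · exact fun h => Or.inl ⟨hc, h.1⟩
    · rintro (⟨-, h⟩ | ⟨h, -⟩)
      · exact ⟨h, by linarith⟩
      · exact absurd hc (not_lt.2 h.le)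
  · have : 0 ≤ 2 * c * (η - 1) ↔ 1 ≤ η := by
      rw [mul_nonneg_iff_of_pos_left (by linarith), sub_nonneg]
    rw [this]
    constructor
    · exact fun h => Or.inr ⟨hc, h.1, by linarith⟩
    · rintro (⟨h, -⟩ | ⟨-, h1, h2⟩)
      · exact absurd hc (not_lt.2 h.le)
      · exact ⟨h1, by linarith⟩

theorem far_field_constant_term_eq {ϖX ϖC γ : ℝ} (hγ : γ ≠ 0) (hϖC : ϖC ≠ 0) (k : ℝ) :
    (γ ^ 2 - ((2 * (ϖX - γ ^ 2 / ϖC) - ϖX) + (ϖX - γ ^ 2 / ϖC)) * (k ^ 2 - ϖC))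
        * (γ ^ 2 - ((2 * (ϖX - γ ^ 2 / ϖC) - ϖX) - (ϖX - γ ^ 2 / ϖC)) * (k ^ 2 - ϖC))
      = (γ ^ 2) ^ 2 / ϖC ^ 2 * (k ^ 2 * (2 * ϖC * (ϖX * ϖC / γ ^ 2 - 1)
          - (2 * (ϖX * ϖC / γ ^ 2) - 3) * k ^ 2)) := by
  field_simp
  ring

/-- First stability condition at the far-field value `ζ = ϖX − γ²/ϖC`: the constant term
of the dispersion quartic, in factored form, is nonnegative for all modes `k` if and only
if `(ϖC < 0 and η ≤ 1)` or `(ϖC > 0 and 1 ≤ η ≤ 3/2)`, where `η = ϖX·ϖC/γ²`. -/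
theorem first_stability_condition_regimes
    (ϖX ϖC γ : ℝ) (hγ : γ ≠ 0) (hϖC : ϖC ≠ 0) :
    (∀ k : ℝ,
      (γ ^ 2 - ((2 * (ϖX - γ ^ 2 / ϖC) - ϖX) + (ϖX - γ ^ 2 / ϖC)) * (k ^ 2 - ϖC))
        * (γ ^ 2 - ((2 * (ϖX - γ ^ 2 / ϖC) - ϖX) - (ϖX - γ ^ 2 / ϖC)) * (k ^ 2 - ϖC))
        ≥ 0)
    ↔ ((ϖC < 0 ∧ ϖX * ϖC / γ ^ 2 ≤ 1) ∨
       (ϖC > 0 ∧ 1 ≤ ϖX * ϖC / γ ^ 2 ∧ ϖX * ϖC / γ ^ 2 ≤ 3/2)) := by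
  have hpos : 0 < (γ ^ 2) ^ 2 / ϖC ^ 2 := by positivity
  simp_rw [ge_iff_le, far_field_constant_term_eq hγ hϖC, mul_nonneg_iff_of_pos_left hpos,
    Real.forall_sq_mul_sub_mul_sq_nonneg_iff]
  exact stability_regimes_iff hϖC
end

section
/- Let ϖ_X, ϖ_C, γ be real numbers with γ ≠ 0, ϖ_C > 0, and γ² < ϖ_X·ϖ_C < (3/2)·γ² (band 1.2). Set ζ = ϖ_X − γ²/ϖ_C and α = 2ζ − ϖ_X. Then there exists a real k such that, with β = k² − ϖ_C, the discriminant satisfies (α² + β² + 2γ² − ζ²)² − 4·(γ⁴ − 2αβγ² + (α² − ζ²)β²) < 0; consequently there exist a real k and a complex number s with positive real part such that D(k,s) = 0. Hence the far field of the dark solitons in band 1.2 is linearly unstable. -/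
/-- Instability of the far field of band 1.2: for `ϖC > 0` and `γ² < ϖX·ϖC < (3/2)γ²`,
the discriminant of the dispersion quartic is negative for some mode `k`, and hence the
quartic has a complex root with positive real part. -/
theorem far_field_unstable_band_1_2
    (ϖX ϖC γ : ℝ) (hγ : γ ≠ 0) (hϖC : 0 < ϖC)
    (hband₁ : γ ^ 2 < ϖX * ϖC) (hband₂ : ϖX * ϖC < (3/2) * γ ^ 2) :
    (∃ k : ℝ,
      (((2 * (ϖX - γ ^ 2 / ϖC) - ϖX) ^ 2 + (k ^ 2 - ϖC) ^ 2 + 2 * γ ^ 2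
          - (ϖX - γ ^ 2 / ϖC) ^ 2) ^ 2
        - 4 * (γ ^ 4 - 2 * (2 * (ϖX - γ ^ 2 / ϖC) - ϖX) * (k ^ 2 - ϖC) * γ ^ 2
          + ((2 * (ϖX - γ ^ 2 / ϖC) - ϖX) ^ 2 - (ϖX - γ ^ 2 / ϖC) ^ 2)
            * (k ^ 2 - ϖC) ^ 2)) < 0) ∧
    (∃ (k : ℝ) (s : ℂ), 0 < s.re ∧
      s ^ 4
        + ((((2 * (ϖX - γ ^ 2 / ϖC) - ϖX) ^ 2 + (k ^ 2 - ϖC) ^ 2 + 2 * γ ^ 2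
            - (ϖX - γ ^ 2 / ϖC) ^ 2 : ℝ)) : ℂ) * s ^ 2
        + (((γ ^ 4 - 2 * (2 * (ϖX - γ ^ 2 / ϖC) - ϖX) * (k ^ 2 - ϖC) * γ ^ 2
            + ((2 * (ϖX - γ ^ 2 / ϖC) - ϖX) ^ 2 - (ϖX - γ ^ 2 / ϖC) ^ 2)
              * (k ^ 2 - ϖC) ^ 2 : ℝ)) : ℂ) = 0) := by
  have hγ2 : 0 < γ ^ 2 := by positivity
  set ζ : ℝ := ϖX - γ ^ 2 / ϖC with hζdef
  set α : ℝ := 2 * ζ - ϖX with hαdef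
  have hc : γ ^ 2 / ϖC * ϖC = γ ^ 2 := div_mul_cancel₀ _ (ne_of_gt hϖC)
  have hζpos : 0 < ζ := by
    rw [hζdef]
    rw [sub_pos, div_lt_iff₀ hϖC]
    linarith
  have hαζ : α + ζ < 0 := by
    have : (α + ζ) * ϖC < 0 := by
      have : (α + ζ) * ϖC = 2 * (ϖX * ϖC) - 3 * γ ^ 2 := by
        rw [hαdef, hζdef]; field_simp; ring
      rw [this]; linarith
    nlinarith
  have hα : α < 0 := by linarith
  set m : ℝ := α ^ 2 - ζ ^ 2 with hmdef
  have hm : 0 < m := by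
    have : m = (α + ζ) * (α - ζ) := by rw [hmdef]; ring
    rw [this]
    exact mul_pos_of_neg_of_neg hαζ (by linarith)
  set β : ℝ := Real.sqrt m with hβdef
  have hβpos : 0 < β := Real.sqrt_pos.2 hm
  have hβ2 : β ^ 2 = α ^ 2 - ζ ^ 2 := Real.sq_sqrt hm.le
  have hβα : β + α < 0 := by nlinarith [sq_nonneg (β - α)]
  set k : ℝ := Real.sqrt (β + ϖC) with hkdef
  have hkβ : k ^ 2 - ϖC = β := by
    rw [hkdef, Real.sq_sqrt (by linarith)]; ring
  have hneg : (α ^ 2 + β ^ 2 + 2 * γ ^ 2 - ζ ^ 2) ^ 2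
      - 4 * (γ ^ 4 - 2 * α * β * γ ^ 2 + (α ^ 2 - ζ ^ 2) * β ^ 2) < 0 := by
    have hE : (α ^ 2 + β ^ 2 + 2 * γ ^ 2 - ζ ^ 2) ^ 2
        - 4 * (γ ^ 4 - 2 * α * β * γ ^ 2 + (α ^ 2 - ζ ^ 2) * β ^ 2)
        = 8 * γ ^ 2 * β * (β + α) := by
      linear_combination (β ^ 2 - α ^ 2 + ζ ^ 2 - 4 * γ ^ 2) * hβ2
    rw [hE]
    have h1 : 0 < 8 * γ ^ 2 * β := by positivity
    exact mul_neg_of_pos_of_neg h1 hβα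
  constructor
  · exact ⟨k, by rw [hkβ]; exact hneg⟩
  · refine ⟨k, ?_⟩
    rw [hkβ]
    set p : ℝ := α ^ 2 + β ^ 2 + 2 * γ ^ 2 - ζ ^ 2 with hpdef
    set q : ℝ := γ ^ 4 - 2 * α * β * γ ^ 2 + (α ^ 2 - ζ ^ 2) * β ^ 2 with hqdef
    have hD : 0 < 4 * q - p ^ 2 := by linarith [hneg]
    set d : ℝ := Real.sqrt (4 * q - p ^ 2) with hddef
    have hd2 : d ^ 2 = 4 * q - p ^ 2 := Real.sq_sqrt hD.le
    have hdpos : 0 < d := Real.sqrt_pos.2 hD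
    set z : ℂ := ⟨-p / 2, d / 2⟩ with hzdef
    have hzeq : z = (-(p : ℂ) + (d : ℂ) * Complex.I) / 2 := by
      apply Complex.ext <;>
        simp [hzdef, Complex.div_re, Complex.div_im, Complex.normSq] <;> ring
    have hz : z ^ 2 + (p : ℂ) * z + (q : ℂ) = 0 := by
      rw [hzeq]
      have hdC : (d : ℂ) ^ 2 = 4 * (q : ℂ) - (p : ℂ) ^ 2 := by
        exact_mod_cast congrArg (Complex.ofReal) hd2
      linear_combination (-(1 : ℂ) / 4) * hdC + ((d : ℂ) ^ 2 / 4) * Complex.I_sq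
    obtain ⟨s, hs⟩ := IsAlgClosed.exists_pow_nat_eq z (n := 2) (by norm_num)
    have hsre : s.re ≠ 0 := by
      intro h0
      have him : (s ^ 2).im = 0 := by
        rw [sq, Complex.mul_im, h0]; ring
      rw [hs] at him
      simp [hzdef] at him
      exact hdpos.ne' him
    have key : ∀ t : ℂ, t ^ 2 = z →
        t ^ 4 + (p : ℂ) * t ^ 2 + (q : ℂ) = 0 := by
      intro t ht
      have : t ^ 4 = z ^ 2 := by rw [show t ^ 4 = (t ^ 2) ^ 2 by ring, ht]
      rw [this, ht]; exact hz
    rcases lt_or_gt_of_ne hsre with hlt | hgt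
    · exact ⟨-s, by simpa using neg_pos.2 hlt, key (-s) (by rw [neg_pow]; simpa using hs)⟩
    · exact ⟨s, hgt, key s hs⟩
end
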